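/- arXiv:2109.06549 — 12 statements merged into one kernel-verified Lean document; each statement's English description precedes it below -/
import Mathlib

section
/- Let N ∈ ℕ and let A be a real square matrix indexed by {0,…,N} that is almost upper triangular, i.e. A i j = 0 whenever j + 1 < i. Then det(A) = ∑_{j=0}^{N} A 0 j · (∏_{i=1}^{j} (−A i (i−1))) · det(A_{[j+1,N]}), where A_{[j+1,N]} is the submatrix of A obtained by keeping rows and columns with indices in [j+1, N], and with the convention that the determinant of the empty matrix (case j = N) equals 1. -/
/-!
Expand along column `0`: as `A` is almost upper triangular, only rows `0` and `1` contribute.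
Deleting row `1` and column `0` leaves a matrix that is again almost upper triangular and whose
first row is `(A 0 (j + 1))_j`, so by induction on `N` its first-row expansion yields the summands
`j ≥ 1`, each times the extra factor `-A 1 0`; row `0` yields the summand `j = 0`.
-/

/-- Determinant of the square submatrix `(A i j)_{a ≤ i,j ≤ b}`; equals `1` when `a > b`
(empty matrix). -/
noncomputable def subDet (A : ℕ → ℕ → ℝ) (a b : ℕ) : ℝ :=
  Matrix.det (Matrix.of fun i j : Fin (b + 1 - a) => A (a + i.1) (a + j.1))

open Finset

lemma prod_Icc_one_succ {M : Type*} [CommMonoid M] (g : ℕ → M) (k : ℕ) :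
    ∏ i ∈ Icc 1 (k + 1), g i = g 1 * ∏ i ∈ Icc 1 k, g (i + 1) := by
  rw [Icc_eq_cons_Ioc (by omega), prod_cons, ← Icc_add_one_left_eq_Ioc, ← map_add_right_Icc,
    prod_map]
  rfl

lemma subDet_zero_eq_det (A : ℕ → ℕ → ℝ) (n : ℕ) :
    subDet A 0 n = (Matrix.of fun i j : Fin (n + 1) => A i j).det := by
  simp only [subDet, Nat.sub_zero, zero_add]

lemma subDet_congr {A B : ℕ → ℕ → ℝ} {a b : ℕ}
    (h : ∀ i j, a ≤ i → i ≤ b → a ≤ j → j ≤ b → A i j = B i j) :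
    subDet A a b = subDet B a b := by
  unfold subDet
  congr 1
  ext i j
  exact h _ _ (by omega) (by omega) (by omega) (by omega)

lemma subDet_succ_succ (A : ℕ → ℕ → ℝ) (a b : ℕ) :
    subDet A (a + 1) (b + 1) = subDet (fun i j => A (i + 1) (j + 1)) a b := by
  have h : b + 1 + 1 - (a + 1) = b + 1 - a := by omega
  unfold subDet
  rw [← Matrix.det_reindex_self (finCongr h)]
  congr 1
  ext i j
  simp only [Matrix.reindex_apply, Matrix.submatrix_apply, Matrix.of_apply, finCongr_symm,
    finCongr_apply, Fin.val_cast]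
  ring_nf

def eraseRowFirstCol {R : Type*} (A : ℕ → ℕ → R) (r : ℕ) : ℕ → ℕ → R :=
  fun i j => A (if i < r then i else i + 1) (j + 1)

lemma eraseRowFirstCol_of_lt {R : Type*} (A : ℕ → ℕ → R) {r i : ℕ} (j : ℕ) (h : i < r) :
    eraseRowFirstCol A r i j = A i (j + 1) := by
  rw [eraseRowFirstCol, if_pos h]

lemma eraseRowFirstCol_of_le {R : Type*} (A : ℕ → ℕ → R) {r i : ℕ} (j : ℕ) (h : r ≤ i) :
    eraseRowFirstCol A r i j = A (i + 1) (j + 1) := by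
  rw [eraseRowFirstCol, if_neg (Nat.not_lt.2 h)]

lemma subDet_zero_succ_eq_sum_column_zero (A : ℕ → ℕ → ℝ) (n : ℕ) :
    subDet A 0 (n + 1) =
      ∑ r ∈ range (n + 2), (-1) ^ r * A r 0 * subDet (eraseRowFirstCol A r) 0 n := by
  rw [subDet_zero_eq_det, Matrix.det_succ_column_zero, ← Fin.sum_univ_eq_sum_range]
  refine Fintype.sum_congr _ _ fun r => ?_
  rw [subDet_zero_eq_det]
  congr 2
  ext i j
  simp only [Matrix.submatrix_apply, Matrix.of_apply, Fin.succAbove, Fin.lt_def, Fin.val_castSucc,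
    Fin.val_succ, eraseRowFirstCol]
  split_ifs <;> rfl

noncomputable def expansionTerm (A : ℕ → ℕ → ℝ) (N j : ℕ) : ℝ :=
  A 0 j * (∏ i ∈ Icc 1 j, -A i (i - 1)) * subDet A (j + 1) N

lemma expansionTerm_zero (A : ℕ → ℕ → ℝ) (N : ℕ) :
    expansionTerm A N 0 = A 0 0 * subDet A 1 N := by
  simp [expansionTerm]

lemma expansionTerm_succ (A : ℕ → ℕ → ℝ) (N k : ℕ) :
    expansionTerm A (N + 1) (k + 1) = -A 1 0 * expansionTerm (eraseRowFirstCol A 1) N k := by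
  have hprod : ∏ i ∈ Icc 1 k, -eraseRowFirstCol A 1 i (i - 1) =
      ∏ i ∈ Icc 1 k, -A (i + 1) (i + 1 - 1) :=
    prod_congr rfl fun i hi => by
      rw [eraseRowFirstCol_of_le A _ (mem_Icc.1 hi).1, Nat.add_sub_cancel,
        Nat.sub_add_cancel (mem_Icc.1 hi).1]
  have hsub : subDet A (k + 1 + 1) (N + 1) = subDet (eraseRowFirstCol A 1) (k + 1) N := by
    rw [subDet_succ_succ]
    exact subDet_congr fun i j hi _ _ _ => (eraseRowFirstCol_of_le A j (by omega)).symm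
  rw [expansionTerm, expansionTerm, prod_Icc_one_succ, hprod, hsub,
    eraseRowFirstCol_of_lt A k zero_lt_one]
  ring

/-- Lemma 1.2 (expansion of the determinant of an almost upper triangular matrix
along its first row). -/
theorem det_expansion_almost_upper_triangular (N : ℕ) (A : ℕ → ℕ → ℝ)
    (hA : ∀ i j, i ≤ N → j ≤ N → j + 1 < i → A i j = 0) :
    subDet A 0 N =
      ∑ j ∈ Finset.range (N + 1),
        A 0 j * (∏ i ∈ Finset.Icc 1 j, (-(A i (i - 1)))) * subDet A (j + 1) N := by
  change subDet A 0 N = ∑ j ∈ range (N + 1), expansionTerm A N j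
  induction N generalizing A with
  | zero => simp [expansionTerm, subDet]
  | succ N ih =>
    have expand_minor := ih (eraseRowFirstCol A 1) fun i j hi hj hij => by
      rw [eraseRowFirstCol_of_le A j (by omega)]
      exact hA _ _ (by omega) (by omega) (by omega)
    have hvanish : ∀ r ∈ range N,
        (-1) ^ (r + 2) * A (r + 2) 0 * subDet (eraseRowFirstCol A (r + 2)) 0 N = 0 :=
      fun r hr => by rw [hA _ _ (by have := mem_range.1 hr; omega) (by omega) (by omega)]; ring
    have hfirst : subDet (eraseRowFirstCol A 0) 0 N = subDet A 1 (N + 1) := by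
      rw [subDet_succ_succ]
      exact subDet_congr fun i j _ _ _ _ => eraseRowFirstCol_of_le A j (Nat.zero_le i)
    rw [subDet_zero_succ_eq_sum_column_zero, sum_range_succ' _ (N + 1), sum_range_succ',
      sum_eq_zero hvanish, sum_range_succ', expansionTerm_zero, hfirst]
    simp only [expansionTerm_succ, ← mul_sum, ← expand_minor]
    ring
end

section
/- Let U : ℕ → ℕ → ℝ satisfy U i j = 0 whenever j + 1 < i (almost upper triangular). Then for every y ∈ ℕ: det(Id − U_{[0,y]}) = det(Id − U_{[0,y−1]}) · (1 − U y y) − ∑_{x=0}^{y−1} det(Id − U_{[0,x−1]}) · U x y · ∏_{j=x+1}^{y} U j (j−1), with the convention det(Id − U_{[0,−1]}) = 1. -/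
/-!
Write `D n = det(Id − U_{[0,n−1]})` and let `E n w` be `det(Id − U_{[0,n]})` with its last
column replaced by `(w 0, …, w n)`. Since `U` is almost upper triangular, the last row of that
matrix has at most two nonzero entries, `−U (n+1) n` and `w (n+1)`, so expanding along it gives
`E (n+1) w = w (n+1) · D (n+1) + U (n+1) n · E n w`. Unrolling,
`E n w = ∑_{x ≤ n} w x · D x · ∏_{j=x+1}^{n} U j (j−1)`, and the theorem is the case where `w`
is the actual last column `δ_{· y} − U · y`, for which `E y w = D (y+1)`.
-/

/-- `detOneSub U n = det(Id − U_{[0,n−1]})`, with the convention that it equals `1`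
when `n = 0` (i.e. `det(Id − U_{[0,−1]}) = 1`). -/
noncomputable def detOneSub (U : ℕ → ℕ → ℝ) (n : ℕ) : ℝ :=
  Matrix.det (1 - Matrix.of fun i j : Fin n => U i.1 j.1)

theorem Matrix.det_succ_succ_of_last_row_eq_zero {R : Type*} [CommRing R] {n : ℕ}
    (A : Matrix (Fin (n + 2)) (Fin (n + 2)) R)
    (hA : ∀ j : Fin n, A (Fin.last _) j.castSucc.castSucc = 0) :
    A.det = A (Fin.last _) (Fin.last _) * (A.submatrix Fin.castSucc Fin.castSucc).det -
      A (Fin.last _) (Fin.last n).castSucc *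
        (A.submatrix Fin.castSucc (Fin.last n).castSucc.succAbove).det := by
  rw [det_succ_row A (Fin.last _), Fin.sum_univ_castSucc, Fin.sum_univ_castSucc,
    Finset.sum_eq_zero fun j _ => by rw [hA, mul_zero, zero_mul]]
  simp only [Fin.succAbove_last, Fin.val_last, Fin.val_castSucc]
  rw [(Odd.neg_one_pow ⟨n, by ring⟩ : (-1 : R) ^ (n + 1 + n) = -1),
    (Even.neg_one_pow ⟨n + 1, rfl⟩ : (-1 : R) ^ (n + 1 + (n + 1)) = 1)]
  ring

section DetOneSub

variable (U : ℕ → ℕ → ℝ)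

def oneSubMatrix (n : ℕ) : Matrix (Fin n) (Fin n) ℝ :=
  1 - Matrix.of fun i j : Fin n => U i.1 j.1

theorem detOneSub_eq_det_oneSubMatrix (n : ℕ) : detOneSub U n = (oneSubMatrix U n).det :=
  rfl

theorem oneSubMatrix_apply {n : ℕ} (i j : Fin n) :
    oneSubMatrix U n i j = (if i = j then 1 else 0) - U i j := by
  simp [oneSubMatrix, Matrix.one_apply]

theorem oneSubMatrix_apply_of_ne {n : ℕ} {i j : Fin n} (h : i ≠ j) :
    oneSubMatrix U n i j = -U i j := by
  simp [oneSubMatrix_apply, h]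

noncomputable def detOneSubUpdateLastCol (n : ℕ) (w : ℕ → ℝ) : ℝ :=
  ((oneSubMatrix U (n + 1)).updateCol (Fin.last n) fun i => w i).det

theorem detOneSub_succ_eq_updateLastCol (n : ℕ) :
    detOneSub U (n + 1) =
      detOneSubUpdateLastCol U n fun i => (if i = n then 1 else 0) - U i n := by
  rw [detOneSubUpdateLastCol, detOneSub_eq_det_oneSubMatrix]
  congr 1
  ext i j
  by_cases hj : j = Fin.last n
  · simp [hj, oneSubMatrix_apply, Fin.ext_iff]
  · simp [hj]

theorem detOneSubUpdateLastCol_zero (w : ℕ → ℝ) : detOneSubUpdateLastCol U 0 w = w 0 := by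
  simp [detOneSubUpdateLastCol]

variable {U}

theorem detOneSubUpdateLastCol_succ (hU : ∀ i j, j + 1 < i → U i j = 0) (n : ℕ)
    (w : ℕ → ℝ) :
    detOneSubUpdateLastCol U (n + 1) w =
      w (n + 1) * detOneSub U (n + 1) + U (n + 1) n * detOneSubUpdateLastCol U n w := by
  set A := (oneSubMatrix U (n + 2)).updateCol (Fin.last (n + 1)) fun i => w i
  have hcorner : A.submatrix Fin.castSucc Fin.castSucc = oneSubMatrix U (n + 1) := by
    ext i j
    simp [A, oneSubMatrix_apply]
  have hminor : A.submatrix Fin.castSucc (Fin.last n).castSucc.succAbove =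
      (oneSubMatrix U (n + 1)).updateCol (Fin.last n) fun i => w i := by
    ext i j
    induction j using Fin.lastCases with
    | last => simp [A]
    | cast j =>
      simp [A, oneSubMatrix_apply, Fin.succAbove_of_castSucc_lt _ _
        (Fin.castSucc_lt_castSucc_iff.2 (Fin.castSucc_lt_last j))]
  have hlast : A (Fin.last _) (Fin.last _) = w (n + 1) := by simp [A]
  have hsubdiag : A (Fin.last _) (Fin.last n).castSucc = -U (n + 1) n := by
    simp [A, oneSubMatrix_apply_of_ne U (Fin.castSucc_lt_last _).ne']
  rw [detOneSubUpdateLastCol, Matrix.det_succ_succ_of_last_row_eq_zero A, hcorner, hminor,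
    hlast, hsubdiag, detOneSub_eq_det_oneSubMatrix, detOneSubUpdateLastCol]
  · ring
  · intro j
    simp [A, oneSubMatrix_apply_of_ne U (Fin.castSucc_lt_last _).ne', hU (n + 1) j (by omega)]

theorem detOneSubUpdateLastCol_eq_sum (hU : ∀ i j, j + 1 < i → U i j = 0) (n : ℕ)
    (w : ℕ → ℝ) :
    detOneSubUpdateLastCol U n w =
      ∑ x ∈ Finset.range (n + 1),
        w x * detOneSub U x * ∏ j ∈ Finset.Icc (x + 1) n, U j (j - 1) := by
  induction n with
  | zero => simp [detOneSubUpdateLastCol_zero, detOneSub]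
  | succ n ih =>
    have hprod : ∀ x ∈ Finset.range (n + 1),
        w x * detOneSub U x * ∏ j ∈ Finset.Icc (x + 1) (n + 1), U j (j - 1) =
          U (n + 1) n * (w x * detOneSub U x * ∏ j ∈ Finset.Icc (x + 1) n, U j (j - 1)) :=
      fun x hx => by
        rw [Finset.prod_Icc_succ_top (by simpa using hx), Nat.add_sub_cancel]
        ring
    rw [detOneSubUpdateLastCol_succ hU, ih, Finset.sum_range_succ _ (n + 1),
      Finset.sum_congr rfl hprod, ← Finset.mul_sum, Finset.Icc_eq_empty (by omega),
      Finset.prod_empty]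
    ring

end DetOneSub

/-- Lemma 2.2: recursion for the determinants `det(Id − U_{[0,y]})` of an almost
upper triangular matrix `U`. -/
theorem detOneSub_recursion (U : ℕ → ℕ → ℝ)
    (hU : ∀ i j, j + 1 < i → U i j = 0) (y : ℕ) :
    detOneSub U (y + 1) =
      detOneSub U y * (1 - U y y) -
        ∑ x ∈ Finset.range y,
          detOneSub U x * U x y * ∏ j ∈ Finset.Icc (x + 1) y, U j (j - 1) := by
  have hoff : ∀ x ∈ Finset.range y,
      ((if x = y then 1 else 0) - U x y) * detOneSub U x *
          ∏ j ∈ Finset.Icc (x + 1) y, U j (j - 1) =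
        -(detOneSub U x * U x y * ∏ j ∈ Finset.Icc (x + 1) y, U j (j - 1)) :=
    fun x hx => by
      rw [if_neg (Finset.mem_range.1 hx).ne]
      ring
  rw [detOneSub_succ_eq_updateLastCol, detOneSubUpdateLastCol_eq_sum hU,
    Finset.sum_range_succ, Finset.sum_congr rfl hoff, Finset.sum_neg_distrib, if_pos rfl,
    Finset.Icc_eq_empty (by omega), Finset.prod_empty]
  ring
end

section
/- Let U be an irreducible almost upper triangular transition matrix on ℕ (irreducibility forces U j (j−1) > 0 for every j ≥ 1, since −1 steps are the only downward moves). Define π 0 = 1 and, for a ≥ 1, π a = det(Id − U_{[0,a−1]}) / ∏_{j=1}^{a} U j (j−1). Then π a > 0 for every a, and π is an invariant measure for U: for every b ∈ ℕ, ∑_{a} π a · U a b = π b (the sum has only the finitely many nonzero terms a ≤ b+1). -/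
/-- Irreducibility of a matrix on `ℕ`: any state can be reached from any other through
a path of positive transitions. -/
def MatIrreducible (M : ℕ → ℕ → ℝ) : Prop :=
  ∀ i j : ℕ, ∃ (n : ℕ) (x : ℕ → ℕ), 0 < n ∧ x 0 = i ∧ x n = j ∧
    ∀ k, k < n → 0 < M (x k) (x (k + 1))

/-!
Since `U` is upper Hessenberg, deleting row `a` and the last column of `Id − U_{[0,n]}` leaves a
block triangular matrix with determinant `det(Id − U_{[0,a−1]}) · ∏_{a<j≤n} (−U j (j−1))`, so
expanding along the last column gives a recurrence for `det(Id − U_{[0,n]})`; divided by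
`∏_{1≤j≤n} U j (j−1)` it is exactly the invariance equation at column `n`.

Positivity follows by induction on `b`: summing the invariance equations over `c ≤ b` balances
the flow across the cut `{0,…,b} | {b+1,…}`, namely
`π (b+1) ∑_{c≤b} U (b+1) c = ∑_{a≤b} π a (1 − ∑_{c≤b} U a c)`, and by irreducibility some
`a ≤ b` jumps above `b`, which makes the right-hand side positive.
-/

open Matrix Finset

section Hessenberg

variable {R : Type*} [CommRing R]

def leadingBlock (A : ℕ → ℕ → R) (n : ℕ) : Matrix (Fin n) (Fin n) R :=
  of fun i j : Fin n => A i j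

theorem det_succ_of_last_row_eq_zero {n : ℕ} (B : Matrix (Fin (n + 1)) (Fin (n + 1)) R)
    (h : ∀ j, j ≠ Fin.last n → B (Fin.last n) j = 0) :
    B.det = B (Fin.last n) (Fin.last n) * (B.submatrix Fin.castSucc Fin.castSucc).det := by
  rw [det_succ_row B (Fin.last n), Fintype.sum_eq_single (Fin.last n) fun j hj => by simp [h j hj]]
  simp [← two_mul, pow_mul]

variable {A : ℕ → ℕ → R}

theorem det_leadingBlock_submatrix_succAbove_castSucc (hA : ∀ i j, j + 1 < i → A i j = 0)
    (n : ℕ) (a : Fin (n + 1)) :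
    ((leadingBlock A (n + 1)).submatrix a.succAbove Fin.castSucc).det
      = (leadingBlock A a).det * ∏ j ∈ Ioc (a : ℕ) n, A j (j - 1) := by
  induction n with
  | zero =>
    obtain rfl : a = 0 := Subsingleton.elim (α := Fin 1) _ _
    simp
  | succ n ih =>
    induction a using Fin.lastCases with
    | last => simp [leadingBlock]; rfl
    | cast a =>
      have hminor : ((leadingBlock A (n + 2)).submatrix a.castSucc.succAbove Fin.castSucc).submatrix
          Fin.castSucc Fin.castSucc = (leadingBlock A (n + 1)).submatrix a.succAbove Fin.castSucc := by
        ext i j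
        simp [leadingBlock]
      rw [det_succ_of_last_row_eq_zero _ fun j hj => ?_, hminor, ih, Fin.val_castSucc,
        prod_Ioc_succ_top a.is_le]
      · simp only [leadingBlock, submatrix_apply, of_apply,
          Fin.succAbove_ne_last_last (Fin.castSucc_lt_last a).ne]
        simp only [Fin.val_last, Fin.val_castSucc, Nat.add_sub_cancel]
        ring
      · have hj : (j : ℕ) < n := Fin.val_lt_last hj
        simpa [leadingBlock] using hA _ _ (by omega)

theorem det_leadingBlock_succ (hA : ∀ i j, j + 1 < i → A i j = 0) (n : ℕ) :
    (leadingBlock A (n + 1)).det = ∑ a : Fin (n + 1),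
      (-1) ^ ((a : ℕ) + n) * A a n * (leadingBlock A a).det * ∏ j ∈ Ioc (a : ℕ) n, A j (j - 1) := by
  rw [det_succ_column _ (Fin.last n)]
  refine Fintype.sum_congr _ _ fun a => ?_
  rw [Fin.succAbove_last, det_leadingBlock_submatrix_succAbove_castSucc hA]
  simp [leadingBlock, mul_assoc]

end Hessenberg

theorem MatIrreducible.exists_exit {M : ℕ → ℕ → ℝ} (hM : MatIrreducible M) {P : ℕ → Prop}
    {i j : ℕ} (hi : P i) (hj : ¬ P j) : ∃ a c, P a ∧ ¬ P c ∧ 0 < M a c := by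
  obtain ⟨n, x, -, rfl, rfl, hx⟩ := hM i j
  induction n with
  | zero => exact absurd hi hj
  | succ n ih =>
    by_cases h : P (x n)
    · exact ⟨x n, x (n + 1), h, hj, hx n n.lt_succ_self⟩
    · exact ih (fun k hk => hx k (by omega)) h

section Chain

variable {U : ℕ → ℕ → ℝ}

theorem detOneSub_eq_det_leadingBlock (n : ℕ) :
    detOneSub U n = (leadingBlock (fun i j => (if i = j then 1 else 0) - U i j) n).det := by
  refine congrArg det (ext fun i j => ?_)
  simp [leadingBlock, one_apply, Fin.val_inj]

theorem detOneSub_succ_add (hut : ∀ i j, j + 1 < i → U i j = 0) (n : ℕ) :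
    detOneSub U (n + 1) + ∑ a ∈ range (n + 1),
      U a n * detOneSub U a * ∏ j ∈ Ioc a n, U j (j - 1) = detOneSub U n := by
  have hterm : ∀ a ∈ range (n + 1), (-1) ^ (a + n) * ((if a = n then 1 else 0) - U a n) *
      detOneSub U a * ∏ j ∈ Ioc a n, ((if j = j - 1 then 1 else 0) - U j (j - 1))
      = (if a = n then detOneSub U a else 0) - U a n * detOneSub U a * ∏ j ∈ Ioc a n, U j (j - 1) := by
    intro a ha
    have hprod : ∏ j ∈ Ioc a n, ((if j = j - 1 then 1 else 0) - U j (j - 1))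
        = ∏ j ∈ Ioc a n, -U j (j - 1) :=
      prod_congr rfl fun j hj => by simp [show j ≠ j - 1 by grind]
    have hsign : (-1 : ℝ) ^ (a + n) * (-1) ^ #(Ioc a n) = 1 := by
      rw [← pow_add, Nat.card_Ioc, Even.neg_one_pow ⟨n, by grind⟩]
    rw [hprod, prod_neg]
    split_ifs with h
    · subst h; simp; ring
    · linear_combination (-(U a n) * detOneSub U a * ∏ j ∈ Ioc a n, U j (j - 1)) * hsign
  rw [detOneSub_eq_det_leadingBlock, det_leadingBlock_succ fun i j h => by
    simp [hut i j h, show i ≠ j by omega]]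
  simp only [← detOneSub_eq_det_leadingBlock]
  rw [Fin.sum_univ_eq_sum_range (fun a => (-1) ^ (a + n) * ((if a = n then 1 else 0) - U a n) *
      detOneSub U a * ∏ j ∈ Ioc a n, ((if j = j - 1 then 1 else 0) - U j (j - 1))),
    sum_congr rfl hterm, sum_sub_distrib, sum_ite_eq']
  simp

theorem MatIrreducible.pos_subdiag (hirr : MatIrreducible U) (hut : ∀ i j, j + 1 < i → U i j = 0)
    (m : ℕ) : 0 < U (m + 1) m := by
  obtain ⟨a, c, ha, hc, hac⟩ :=
    hirr.exists_exit (P := (m < ·)) (i := m + 1) (j := m) (by omega) (lt_irrefl m)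
  have hjump : ¬ c + 1 < a := fun h => hac.ne' (hut a c h)
  obtain ⟨rfl, rfl⟩ : a = m + 1 ∧ c = m := by omega
  exact hac

variable {π : ℕ → ℝ}

theorem sum_range_mul_eq_of_hasSum (hut : ∀ i j, j + 1 < i → U i j = 0)
    (hinv : ∀ b, HasSum (fun a => π a * U a b) (π b)) {b N : ℕ} (hN : b + 2 ≤ N) :
    ∑ a ∈ range N, π a * U a b = π b :=
  (hinv b).unique (hasSum_sum_of_ne_finset_zero fun a ha => by
    rw [hut a b (by simp at ha; omega), mul_zero]) |>.symm

theorem mul_sum_range_eq_sum_mul_one_sub (hut : ∀ i j, j + 1 < i → U i j = 0)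
    (hinv : ∀ b, HasSum (fun a => π a * U a b) (π b)) (b : ℕ) :
    π (b + 1) * ∑ c ∈ range (b + 1), U (b + 1) c
      = ∑ a ∈ range (b + 1), π a * (1 - ∑ c ∈ range (b + 1), U a c) := by
  have hcols : ∑ c ∈ range (b + 1), ∑ a ∈ range (b + 2), π a * U a c
      = ∑ c ∈ range (b + 1), π c :=
    sum_congr rfl fun c hc => sum_range_mul_eq_of_hasSum hut hinv (by simp at hc; omega)
  rw [sum_comm, sum_range_succ] at hcols
  simp only [← mul_sum] at hcols
  simp only [mul_sub, mul_one, sum_sub_distrib]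
  linarith

theorem pos_of_forall_hasSum_mul (hnn : ∀ i j, 0 ≤ U i j) (hrow : ∀ i, HasSum (fun j => U i j) 1)
    (hut : ∀ i j, j + 1 < i → U i j = 0) (hirr : MatIrreducible U)
    (hinv : ∀ b, HasSum (fun a => π a * U a b) (π b)) (h0 : 0 < π 0) (a : ℕ) : 0 < π a := by
  induction a using Nat.strong_induction_on with | _ a ih => ?_
  cases a with
  | zero => exact h0
  | succ b =>
    obtain ⟨a, c, ha, hc, hac⟩ :=
      hirr.exists_exit (P := (· ≤ b)) (i := 0) (j := b + 1) (by omega) (by omega)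
    have hrow_le : ∀ i, ∑ c ∈ range (b + 1), U i c ≤ 1 :=
      fun i => sum_le_hasSum _ (fun j _ => hnn i j) (hrow i)
    have hexit : 0 < 1 - ∑ c' ∈ range (b + 1), U a c' := by
      have := sum_le_hasSum (insert c (range (b + 1))) (fun j _ => hnn a j) (hrow a)
      rw [sum_insert (by simp; omega)] at this
      linarith
    have hflux : 0 < π (b + 1) * ∑ c ∈ range (b + 1), U (b + 1) c := by
      rw [mul_sum_range_eq_sum_mul_one_sub hut hinv]
      refine sum_pos' (fun i hi => ?_) ⟨a, by simp; omega, mul_pos (ih a (by omega)) hexit⟩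
      exact mul_nonneg (ih i (by simp at hi; omega)).le (sub_nonneg.2 (hrow_le i))
    exact pos_of_mul_pos_left hflux (sum_nonneg fun c _ => hnn _ _)

noncomputable def detMeasure (U : ℕ → ℕ → ℝ) (a : ℕ) : ℝ :=
  detOneSub U a / ∏ j ∈ Icc 1 a, U j (j - 1)

theorem prod_Icc_subdiag_ne_zero (hsub : ∀ m, U (m + 1) m ≠ 0) (n : ℕ) :
    ∏ j ∈ Icc 1 n, U j (j - 1) ≠ 0 :=
  prod_ne_zero_iff.2 fun j hj => by
    simpa [show j - 1 + 1 = j by simp at hj; omega] using hsub (j - 1)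

theorem detMeasure_mul_prod (hsub : ∀ m, U (m + 1) m ≠ 0) {a b : ℕ} (hab : a ≤ b) :
    detMeasure U a * ∏ j ∈ Icc 1 b, U j (j - 1) = detOneSub U a * ∏ j ∈ Ioc a b, U j (j - 1) := by
  have hP := prod_Icc_subdiag_ne_zero hsub a
  have hIcc : ∀ n, Icc 1 n = Ioc 0 n := fun n => Icc_add_one_left_eq_Ioc 0 n
  rw [detMeasure, hIcc b, ← prod_Ioc_consecutive _ a.zero_le hab, ← hIcc a]
  field_simp

theorem hasSum_detMeasure_mul (hut : ∀ i j, j + 1 < i → U i j = 0) (hsub : ∀ m, U (m + 1) m ≠ 0)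
    (b : ℕ) : HasSum (fun a => detMeasure U a * U a b) (detMeasure U b) := by
  convert hasSum_sum_of_ne_finset_zero (L := SummationFilter.unconditional ℕ)
    (f := fun a => detMeasure U a * U a b) (s := range (b + 2))
    fun a ha => by rw [hut a b (by simp at ha; omega), mul_zero] using 1
  refine (mul_left_inj' (prod_Icc_subdiag_ne_zero hsub b)).1 ?_
  have hlast : detMeasure U (b + 1) * U (b + 1) b * ∏ j ∈ Icc 1 b, U j (j - 1)
      = detOneSub U (b + 1) := by
    have := detMeasure_mul_prod hsub (le_refl (b + 1))
    rw [prod_Icc_succ_top (by omega), Ioc_self, prod_empty, Nat.add_sub_cancel] at this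
    linear_combination this
  rw [sum_range_succ, add_mul, sum_mul, hlast, detMeasure_mul_prod hsub le_rfl, Ioc_self,
    prod_empty, mul_one, ← detOneSub_succ_add hut b, add_comm]
  congr 1
  refine sum_congr rfl fun a ha => ?_
  rw [mul_right_comm (detMeasure U a), detMeasure_mul_prod hsub (by simp at ha; omega)]
  ring

end Chain

/-- Theorem 2.1 (existence part): an irreducible almost upper triangular transition
matrix `U` admits the positive invariant measure
`π a = det(Id − U_{[0,a−1]}) / ∏_{j=1}^a U j (j−1)` (so `π 0 = 1`). -/
theorem invariant_measure_almost_upper_triangular (U : ℕ → ℕ → ℝ)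
    (hnn : ∀ i j, 0 ≤ U i j)
    (hrow : ∀ i, HasSum (fun j => U i j) 1)
    (hut : ∀ i j, j + 1 < i → U i j = 0)
    (hirr : MatIrreducible U)
    (pi : ℕ → ℝ)
    (hpi : ∀ a, pi a = detOneSub U a / ∏ j ∈ Finset.Icc 1 a, U j (j - 1)) :
    (∀ a, 0 < pi a) ∧ ∀ b, HasSum (fun a => pi a * U a b) (pi b) := by
  obtain rfl : pi = detMeasure U := funext hpi
  have hinv := hasSum_detMeasure_mul hut fun m => (hirr.pos_subdiag hut m).ne'
  refine ⟨pos_of_forall_hasSum_mul hnn hrow hut hirr hinv ?_, hinv⟩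
  simp [detMeasure, detOneSub]
end

section
/- Let U be an irreducible almost upper triangular transition matrix on ℕ, and let π be defined by π 0 = 1 and π a = det(Id − U_{[0,a−1]}) / ∏_{j=1}^{a} U j (j−1) for a ≥ 1. Then the invariant measure of U is unique up to a positive factor: if π' : ℕ → ℝ satisfies π' a ≥ 0 for all a, π' is not identically 0, and for every b the series ∑_a π' a · U a b converges with sum π' b, then there exists a constant c > 0 such that π' a = c · π a for every a ∈ ℕ. -/
open Finset Matrix

def AlmostUpperTriangular (U : ℕ → ℕ → ℝ) : Prop :=
  ∀ i j, j + 1 < i → U i j = 0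

noncomputable def subdiagProd (U : ℕ → ℕ → ℝ) (a b : ℕ) : ℝ :=
  ∏ j ∈ Icc (a + 1) b, U j (j - 1)

def skipIndex (i k : ℕ) : ℕ := if k < i then k else k + 1

/-- `Id − U_{[0,b]}` with row `i` and column `b` deleted. -/
noncomputable def minorOneSub (U : ℕ → ℕ → ℝ) (i b : ℕ) : Matrix (Fin b) (Fin b) ℝ :=
  of fun k l => (if skipIndex i k = l then 1 else 0) - U (skipIndex i k) l

lemma val_succAbove_eq_skipIndex {b : ℕ} (i : Fin (b + 1)) (k : Fin b) :
    (i.succAbove k : ℕ) = skipIndex i k := by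
  unfold Fin.succAbove skipIndex
  split_ifs <;> simp_all [Fin.lt_def]

section

variable {U : ℕ → ℕ → ℝ}

lemma subdiagProd_self (a : ℕ) : subdiagProd U a a = 1 := by
  simp [subdiagProd]

lemma subdiagProd_succ {a b : ℕ} (hab : a ≤ b) :
    subdiagProd U a (b + 1) = subdiagProd U a b * U (b + 1) b := by
  rw [subdiagProd, prod_Icc_succ_top (by omega), Nat.add_sub_cancel, subdiagProd]

lemma subdiagProd_mul {a b c : ℕ} (hab : a ≤ b) (hbc : b ≤ c) :
    subdiagProd U a b * subdiagProd U b c = subdiagProd U a c := by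
  simp only [subdiagProd, Icc_add_one_left_eq_Ioc]
  exact prod_Ioc_consecutive _ hab hbc

lemma subdiagProd_pos (hpos : ∀ j, 0 < U (j + 1) j) (a b : ℕ) : 0 < subdiagProd U a b :=
  prod_pos fun j hj => by
    obtain ⟨k, rfl⟩ : ∃ k, j = k + 1 := ⟨j - 1, by grind⟩
    exact hpos k

lemma det_minorOneSub_self (b : ℕ) : (minorOneSub U b b).det = detOneSub U b := by
  congr 1
  ext k l
  simp [minorOneSub, skipIndex, one_apply, Fin.ext_iff]

lemma det_minorOneSub_succ (hU : AlmostUpperTriangular U) {i m : ℕ} (him : i ≤ m) :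
    (minorOneSub U i (m + 1)).det = -U (m + 1) m * (minorOneSub U i m).det := by
  have hskip : skipIndex i m = m + 1 := if_neg (by omega)
  -- The last row of the minor is row `m + 1` of `Id − U`, with `-U (m+1) m` as only nonzero entry.
  rw [det_succ_row _ (Fin.last m), sum_eq_single (Fin.last m)]
  · have hcorner : minorOneSub U i (m + 1) (Fin.last m) (Fin.last m) = -U (m + 1) m := by
      simp [minorOneSub, hskip]
    have hsub : (minorOneSub U i (m + 1)).submatrix (Fin.last m).succAbove
        (Fin.last m).succAbove = minorOneSub U i m := by
      ext k l
      simp [minorOneSub]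
    rw [hcorner, hsub, Fin.val_last, ← two_mul, pow_mul, neg_one_sq, one_pow, one_mul]
  · intro j _ hj
    have hjm : (j : ℕ) < m := lt_of_le_of_ne (Nat.lt_succ_iff.mp j.isLt) (Fin.val_ne_iff.mpr hj)
    simp [minorOneSub, hskip, hU (m + 1) j (by omega), show m + 1 ≠ j by omega]
  · simp

lemma det_minorOneSub (hU : AlmostUpperTriangular U) {i b : ℕ} (hib : i ≤ b) :
    (minorOneSub U i b).det = (-1) ^ (b - i) * subdiagProd U i b * detOneSub U i := by
  induction b, hib using Nat.le_induction with
  | base => simp [det_minorOneSub_self, subdiagProd_self]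
  | succ m him ih =>
    rw [det_minorOneSub_succ hU him, ih, subdiagProd_succ him, Nat.sub_add_comm him, pow_succ]
    ring

lemma detOneSub_succ (hU : AlmostUpperTriangular U) (b : ℕ) :
    detOneSub U (b + 1) =
      detOneSub U b - ∑ a ∈ range (b + 1), U a b * subdiagProd U a b * detOneSub U a := by
  set A : Matrix (Fin (b + 1)) (Fin (b + 1)) ℝ := 1 - of fun i j : Fin (b + 1) => U i j
  have hminor (i : Fin (b + 1)) :
      A.submatrix i.succAbove (Fin.last b).succAbove = minorOneSub U i b := by
    ext k l
    simp [A, minorOneSub, val_succAbove_eq_skipIndex, one_apply, Fin.ext_iff]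
  have hterm (i : Fin (b + 1)) :
      (-1) ^ ((i : ℕ) + Fin.last b) * A i (Fin.last b) *
          (A.submatrix i.succAbove (Fin.last b).succAbove).det =
        ((if (i : ℕ) = b then 1 else 0) - U i b) * subdiagProd U i b * detOneSub U i := by
    have hib : (i : ℕ) ≤ b := Nat.lt_succ_iff.mp i.isLt
    have hsign : (-1 : ℝ) ^ ((i : ℕ) + b) * (-1) ^ (b - i) = 1 := by
      rw [← pow_add, show (i : ℕ) + b + (b - i) = 2 * b by omega, pow_mul, neg_one_sq, one_pow]
    rw [hminor, det_minorOneSub hU hib]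
    simp only [A, Matrix.sub_apply, one_apply, of_apply, Fin.ext_iff, Fin.val_last]
    linear_combination ((if (i : ℕ) = b then 1 else 0) - U i b) * subdiagProd U i b *
      detOneSub U i * hsign
  change A.det = _
  rw [det_succ_column A (Fin.last b)]
  simp_rw [hterm]
  rw [Fin.sum_univ_eq_sum_range
    (fun a => ((if a = b then 1 else 0) - U a b) * subdiagProd U a b * detOneSub U a)]
  simp [sub_mul, sum_sub_distrib, subdiagProd_self]

end

namespace AlmostUpperTriangular

variable {U : ℕ → ℕ → ℝ} (hU : AlmostUpperTriangular U)
include hU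

lemma pos_of_path {j n : ℕ} {x : ℕ → ℕ} (hstart : j < x 0) (hend : x n ≤ j)
    (hpath : ∀ k < n, 0 < U (x k) (x (k + 1))) : 0 < U (j + 1) j := by
  induction n generalizing x with
  | zero => omega
  | succ n ih =>
    by_cases hx1 : j < x 1
    · exact ih (x := fun k => x (k + 1)) hx1 hend fun k hk => hpath (k + 1) (by omega)
    · have hstep : 0 < U (x 0) (x 1) := hpath 0 n.succ_pos
      have hjump : x 0 ≤ x 1 + 1 := by
        by_contra h
        exact hstep.ne' (hU _ _ (by omega))
      obtain ⟨hx0, hx1⟩ : x 0 = j + 1 ∧ x 1 = j := by omega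
      rwa [hx0, hx1] at hstep

lemma subdiag_pos (hirr : MatIrreducible U) (j : ℕ) : 0 < U (j + 1) j := by
  obtain ⟨n, x, -, hx0, hxn, hpath⟩ := hirr (j + 1) j
  exact hU.pos_of_path (by omega) hxn.le hpath

lemma sum_range_eq_of_hasSum {x : ℕ → ℝ} {b : ℕ} {s : ℝ}
    (h : HasSum (fun a => x a * U a b) s) : ∑ a ∈ range (b + 2), x a * U a b = s :=
  (hasSum_sum_of_ne_finset_zero fun a ha => by
    rw [hU a b (by simp at ha; omega), mul_zero]).unique h

lemma mul_subdiagProd_eq_mul_detOneSub {x : ℕ → ℝ}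
    (hx : ∀ b, ∑ a ∈ range (b + 2), x a * U a b = x b) (a : ℕ) :
    x a * subdiagProd U 0 a = x 0 * detOneSub U a := by
  induction a using Nat.strong_induction_on with
  | _ a ih =>
  cases a with
  | zero => simp [subdiagProd_self, detOneSub]
  | succ b =>
    have hrec : x (b + 1) * U (b + 1) b = x b - ∑ a ∈ range (b + 1), x a * U a b := by
      rw [← hx b, sum_range_succ _ (b + 1)]
      ring
    have hterm : ∀ a ∈ range (b + 1), x a * U a b * subdiagProd U 0 b =
        x 0 * (U a b * subdiagProd U a b * detOneSub U a) := by
      intro a ha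
      have hab : a ≤ b := Nat.lt_succ_iff.mp (mem_range.mp ha)
      rw [← subdiagProd_mul a.zero_le hab]
      linear_combination U a b * subdiagProd U a b * ih a (by omega)
    calc x (b + 1) * subdiagProd U 0 (b + 1)
        = (x b - ∑ a ∈ range (b + 1), x a * U a b) * subdiagProd U 0 b := by
          rw [subdiagProd_succ b.zero_le, ← hrec]
          ring
      _ = x 0 * detOneSub U (b + 1) := by
          rw [sub_mul, sum_mul, sum_congr rfl hterm, ← mul_sum, ih b b.lt_succ_self,
            detOneSub_succ hU]
          ring

end AlmostUpperTriangular

theorem invariant_measure_unique_almost_upper_triangular_general (U : ℕ → ℕ → ℝ)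
    (hut : ∀ i j, j + 1 < i → U i j = 0)
    (hirr : MatIrreducible U)
    (pi : ℕ → ℝ)
    (hpi : ∀ a, pi a = detOneSub U a / ∏ j ∈ Finset.Icc 1 a, U j (j - 1))
    (pi' : ℕ → ℝ)
    (hpi'nn : ∀ a, 0 ≤ pi' a)
    (hpi'ne : ∃ a, pi' a ≠ 0)
    (hpi'inv : ∀ b, HasSum (fun a => pi' a * U a b) (pi' b)) :
    ∃ c : ℝ, 0 < c ∧ ∀ a, pi' a = c * pi a := by
  have hU : AlmostUpperTriangular U := hut
  have hprod_pos (a : ℕ) : 0 < subdiagProd U 0 a := subdiagProd_pos (hU.subdiag_pos hirr) 0 a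
  have hkey (a : ℕ) : pi' a * subdiagProd U 0 a = pi' 0 * detOneSub U a :=
    hU.mul_subdiagProd_eq_mul_detOneSub (fun b => hU.sum_range_eq_of_hasSum (hpi'inv b)) a
  have hpi'0 : pi' 0 ≠ 0 := by
    obtain ⟨a, ha⟩ := hpi'ne
    intro h0
    apply ha
    simpa [h0, (hprod_pos a).ne'] using hkey a
  refine ⟨pi' 0, (hpi'nn 0).lt_of_ne' hpi'0, fun a => ?_⟩
  rw [hpi a]
  change pi' a = pi' 0 * (detOneSub U a / subdiagProd U 0 a)
  rw [← mul_div_assoc, ← hkey, mul_div_cancel_right₀ _ (hprod_pos a).ne']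

/-- Theorem 2.1 (uniqueness part): the invariant measure of an irreducible almost
upper triangular transition matrix is unique up to a positive multiplicative factor,
and is given by `π a = det(Id − U_{[0,a−1]}) / ∏_{j=1}^a U j (j−1)`. -/
theorem invariant_measure_unique_almost_upper_triangular (U : ℕ → ℕ → ℝ)
    (hnn : ∀ i j, 0 ≤ U i j)
    (hrow : ∀ i, HasSum (fun j => U i j) 1)
    (hut : ∀ i j, j + 1 < i → U i j = 0)
    (hirr : MatIrreducible U)
    (pi : ℕ → ℝ)
    (hpi : ∀ a, pi a = detOneSub U a / ∏ j ∈ Finset.Icc 1 a, U j (j - 1))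
    (pi' : ℕ → ℝ)
    (hpi'nn : ∀ a, 0 ≤ pi' a)
    (hpi'ne : ∃ a, pi' a ≠ 0)
    (hpi'inv : ∀ b, HasSum (fun a => pi' a * U a b) (pi' b)) :
    ∃ c : ℝ, 0 < c ∧ ∀ a, pi' a = c * pi a :=
  invariant_measure_unique_almost_upper_triangular_general U hut hirr pi hpi pi' hpi'nn hpi'ne
    hpi'inv
end

section
/- Let U be an irreducible almost upper triangular transition matrix on ℕ and, for each n, let ρ^{(n)} be an invariant probability distribution of the projection U^{(n)} of U onto {0,…,n} (extended by 0 to all of ℕ). Then for any π : ℕ → ℝ with π a ≥ 0 for all a and π not identically 0: π is an invariant measure for U if and only if there exists a sequence of real numbers (c_n) such that for every a ∈ ℕ, c_n · ρ^{(n)} a → π a as n → ∞. -/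
/-- The projection `M^{(n)}` of `M` onto `{0,…,n}`: `M^{(n)} i j = M i j` for
`j ≤ n − 1`, `M^{(n)} i n = ∑_{j ≥ n} M i j` (and `0` beyond `n`). -/
noncomputable def projTM (M : ℕ → ℕ → ℝ) (n : ℕ) : ℕ → ℕ → ℝ :=
  fun i j =>
    if j < n then M i j
    else if j = n then (∑' k : ℕ, if n ≤ k then M i k else 0)
    else 0

open Filter Topology Finset

section AlmostUpperTriangular

variable {M : ℕ → ℕ → ℝ}

theorem pos_subdiag_of_irreducible (hut : ∀ i j, j + 1 < i → M i j = 0)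
    (hirr : MatIrreducible M) (b : ℕ) : 0 < M (b + 1) b := by
  by_contra hb
  obtain ⟨n, x, -, hx0, hxn, hpath⟩ := hirr (b + 1) b
  have habove : ∀ k ≤ n, b < x k := by
    intro k hk
    induction k with
    | zero => omega
    | succ k ih =>
      have hstep := hpath k (by omega)
      have hdown : x k ≤ x (k + 1) + 1 := by
        by_contra h
        rw [hut _ _ (by omega)] at hstep
        exact lt_irrefl _ hstep
      by_contra hle
      have hk : x k = b + 1 := by have := ih (by omega); omega
      rw [hk, show x (k + 1) = b by omega] at hstep
      exact hb hstep
  have := habove n le_rfl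
  omega

theorem hasSum_mul_col (hut : ∀ i j, j + 1 < i → M i j = 0) (w : ℕ → ℝ) (b : ℕ) :
    HasSum (fun a => w a * M a b) (∑ a ∈ range (b + 2), w a * M a b) :=
  hasSum_sum_of_ne_finset_zero fun a ha => by
    rw [hut a b (by simp at ha; omega), mul_zero]

theorem sum_range_mul_col (hut : ∀ i j, j + 1 < i → M i j = 0) (w : ℕ → ℝ) {b n : ℕ}
    (hb : b < n) :
    ∑ a ∈ range (n + 1), w a * M a b = ∑ a ∈ range (b + 2), w a * M a b :=
  (sum_subset (range_subset_range.mpr (by omega)) fun a _ ha => by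
    rw [hut a b (by simp at ha; omega), mul_zero]).symm

theorem hasSum_mul_col_iff (hut : ∀ i j, j + 1 < i → M i j = 0) (w : ℕ → ℝ) (b : ℕ) :
    HasSum (fun a => w a * M a b) (w b) ↔ ∑ a ∈ range (b + 2), w a * M a b = w b :=
  ⟨fun h => (hasSum_mul_col hut w b).unique h, fun h => h ▸ hasSum_mul_col hut w b⟩

end AlmostUpperTriangular

/-- The invariance equations of `M` in the columns `b < n`, with the sum over `a` cut at
`b + 1`; for an almost upper triangular `M` nothing is lost by the cut. -/
def IsInvariantBelow (M : ℕ → ℕ → ℝ) (n : ℕ) (w : ℕ → ℝ) : Prop :=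
  ∀ b < n, ∑ a ∈ range (b + 2), w a * M a b = w b

namespace IsInvariantBelow

variable {M : ℕ → ℕ → ℝ} {n : ℕ} {w z : ℕ → ℝ}

theorem of_projTM (hut : ∀ i j, j + 1 < i → M i j = 0)
    (hw : ∀ b ≤ n, ∑ a ∈ range (n + 1), w a * projTM M n a b = w b) :
    IsInvariantBelow M n w := by
  intro b hb
  rw [← sum_range_mul_col hut w hb, ← hw b hb.le]
  exact sum_congr rfl fun a _ => by simp only [projTM, if_pos hb]

theorem mul_sub_mul (hw : IsInvariantBelow M n w) (hz : IsInvariantBelow M n z) (c d : ℝ) :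
    IsInvariantBelow M n (fun a => c * w a - d * z a) := by
  intro b hb
  simp only [sub_mul, sum_sub_distrib, mul_assoc, ← mul_sum, hw b hb, hz b hb]

theorem const_mul (hw : IsInvariantBelow M n w) (c : ℝ) :
    IsInvariantBelow M n (fun a => c * w a) := by
  simpa using hw.mul_sub_mul hw c 0

theorem eq_zero (hsub : ∀ b, M (b + 1) b ≠ 0) (hw : IsInvariantBelow M n w) (h0 : w 0 = 0) :
    ∀ a ≤ n, w a = 0 := by
  intro a
  induction a using Nat.strong_induction_on with
  | _ a ih =>
    intro ha
    cases a with
    | zero => exact h0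
    | succ b =>
      have hcol := hw b (by omega)
      rw [sum_range_succ, sum_eq_zero fun a ha' => by
        rw [ih a (by simp at ha'; omega) (by simp at ha'; omega), zero_mul],
        ih b (by omega) (by omega), zero_add] at hcol
      exact (mul_eq_zero.mp hcol).resolve_right (hsub b)

theorem mul_eq_mul (hsub : ∀ b, M (b + 1) b ≠ 0) (hw : IsInvariantBelow M n w)
    (hz : IsInvariantBelow M n z) {a : ℕ} (ha : a ≤ n) : z 0 * w a = w 0 * z a :=
  sub_eq_zero.mp <| (hw.mul_sub_mul hz (z 0) (w 0)).eq_zero hsub (by ring) a ha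

theorem apply_zero_ne_zero (hsub : ∀ b, M (b + 1) b ≠ 0) (hw : IsInvariantBelow M n w)
    (hsum : ∑ a ∈ range (n + 1), w a ≠ 0) : w 0 ≠ 0 := fun h0 =>
  hsum <| sum_eq_zero fun a ha => hw.eq_zero hsub h0 a (by simpa [Nat.lt_succ_iff] using ha)

theorem col_of_tendsto {w : ℕ → ℕ → ℝ} {v : ℕ → ℝ} (hw : ∀ n, IsInvariantBelow M n (w n))
    (hv : ∀ a, Tendsto (fun n => w n a) atTop (𝓝 (v a))) (b : ℕ) :
    ∑ a ∈ range (b + 2), v a * M a b = v b := by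
  have hsum : Tendsto (fun n => ∑ a ∈ range (b + 2), w n a * M a b) atTop
      (𝓝 (∑ a ∈ range (b + 2), v a * M a b)) :=
    tendsto_finsetSum _ fun a _ => (hv a).mul_const _
  refine tendsto_nhds_unique (hsum.congr' ?_) (hv b)
  filter_upwards [eventually_gt_atTop b] with n hn using hw n b hn

end IsInvariantBelow

theorem invariant_iff_rescaled_projection_limit_general (U : ℕ → ℕ → ℝ)
    (hut : ∀ i j, j + 1 < i → U i j = 0)
    (hirr : MatIrreducible U)
    (ρ : ℕ → ℕ → ℝ)
    (hρsum : ∀ n, ∑ a ∈ Finset.range (n + 1), ρ n a = 1)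
    (hρinv : ∀ n, ∀ b ≤ n, ∑ a ∈ Finset.range (n + 1), ρ n a * projTM U n a b = ρ n b)
    (pi : ℕ → ℝ) :
    (∀ b, HasSum (fun a => pi a * U a b) (pi b)) ↔
      ∃ c : ℕ → ℝ, ∀ a,
        Filter.Tendsto (fun n => c n * ρ n a) Filter.atTop (nhds (pi a)) := by
  have hsub : ∀ b, U (b + 1) b ≠ 0 := fun b => (pos_subdiag_of_irreducible hut hirr b).ne'
  have hρ : ∀ n, IsInvariantBelow U n (ρ n) := fun n => .of_projTM hut (hρinv n)
  have hρ0 : ∀ n, ρ n 0 ≠ 0 := fun n =>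
    (hρ n).apply_zero_ne_zero hsub (by rw [hρsum n]; exact one_ne_zero)
  simp only [hasSum_mul_col_iff hut]
  constructor
  · intro hpi
    refine ⟨fun n => pi 0 / ρ n 0, fun a => tendsto_const_nhds.congr' ?_⟩
    filter_upwards [eventually_ge_atTop a] with n hn
    have hprop := (hρ n).mul_eq_mul hsub (fun b _ => hpi b) hn
    field_simp [hρ0 n]
    linarith
  · rintro ⟨c, hc⟩
    exact IsInvariantBelow.col_of_tendsto (fun n => (hρ n).const_mul (c n)) hc

/-- Theorem 2.7 (i): a nonnegative nonzero `π` is invariant for the irreducible almost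
upper triangular transition matrix `U` iff there are constants `c n` such that
`c n · ρ^{(n)} → π` pointwise, where `ρ^{(n)}` is the invariant probability distribution
of the projection `U^{(n)}` (extended by `0`). -/
theorem invariant_iff_rescaled_projection_limit (U : ℕ → ℕ → ℝ)
    (hnn : ∀ i j, 0 ≤ U i j)
    (hrow : ∀ i, HasSum (fun j => U i j) 1)
    (hut : ∀ i j, j + 1 < i → U i j = 0)
    (hirr : MatIrreducible U)
    (ρ : ℕ → ℕ → ℝ)
    (hρnn : ∀ n a, 0 ≤ ρ n a)
    (hρzero : ∀ n a, n < a → ρ n a = 0)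
    (hρsum : ∀ n, ∑ a ∈ Finset.range (n + 1), ρ n a = 1)
    (hρinv : ∀ n, ∀ b ≤ n, ∑ a ∈ Finset.range (n + 1), ρ n a * projTM U n a b = ρ n b)
    (pi : ℕ → ℝ) (hpinn : ∀ a, 0 ≤ pi a) (hpine : ∃ a, pi a ≠ 0) :
    (∀ b, HasSum (fun a => pi a * U a b) (pi b)) ↔
      ∃ c : ℕ → ℝ, ∀ a,
        Filter.Tendsto (fun n => c n * ρ n a) Filter.atTop (nhds (pi a)) :=
  invariant_iff_rescaled_projection_limit_general U hut hirr ρ hρsum hρinv pi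
end

section
/- There exist an irreducible almost upper triangular transition matrix U on ℕ and a bounded function R : ℕ → ℝ with R a > 0 for every a and R not constant, such that for every a the series ∑_j U a j · R j converges with sum R a. In particular, some irreducible almost upper triangular transition matrices have several positive, non-proportional right eigenvectors associated with the eigenvalue 1 (R and the constant vector 1). -/
/-!
From state `i` the chain moves either to `i - 1` (from `0`: to `1`) or to `i + 2`. If `R i`
lies strictly between the values of `R` at these two targets, the coefficients expressing `R i`
as a convex combination of them are transition probabilities for which `R` is harmonic, and
both moves get positive probability, which makes the chain irreducible. Such an `R` is
`1 + 2⁻ᵏ` at `2k` and `4 - 2⁻ᵏ` at `2k + 1`: the values decrease to `1` along the even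
states, increase to `4` along the odd ones, and every even value lies below every odd one.
-/

open Relation

theorem Relation.TransGen.exists_path {α : Type*} {r : α → α → Prop} {a b : α}
    (h : TransGen r a b) :
    ∃ (n : ℕ) (x : ℕ → α), 0 < n ∧ x 0 = a ∧ x n = b ∧ ∀ k, k < n → r (x k) (x (k + 1)) := by
  induction h with
  | @single c hac =>
    refine ⟨1, fun k => if k = 0 then a else c, one_pos, rfl, rfl, fun k hk => ?_⟩
    obtain rfl : k = 0 := by omega
    exact hac
  | @tail c d _ hcd ih =>
    obtain ⟨n, x, hn, hx0, hxn, hx⟩ := ih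
    refine ⟨n + 1, fun k => if k ≤ n then x k else d, n.succ_pos, by simp [hx0], by simp, ?_⟩
    intro k hk
    rcases Nat.lt_or_eq_of_le (Nat.le_of_lt_succ hk) with hkn | rfl
    · simpa [hkn.le, Nat.succ_le_of_lt hkn] using hx k hkn
    · simpa [hxn] using hcd

theorem matIrreducible_of_transGen {M : ℕ → ℕ → ℝ}
    (h : ∀ i j, TransGen (fun a b => 0 < M a b) i j) : MatIrreducible M :=
  fun i j => (h i j).exists_path

theorem matIrreducible_of_succ {M : ℕ → ℕ → ℝ}
    (hup : ∀ i, TransGen (fun a b => 0 < M a b) i (i + 1)) (hdown : ∀ i, 0 < M (i + 1) i) :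
    MatIrreducible M := by
  have hdown' : ∀ i, TransGen (fun a b => 0 < M a b) (i + 1) i := fun i => .single (hdown i)
  refine matIrreducible_of_transGen fun i j => ?_
  rcases eq_or_ne i j with rfl | hij
  · exact (hup i).trans (hdown' i)
  · simpa only [transGen_eq_self] using
      transGen_of_succ_of_ne _ (fun k _ => hup k) (fun k _ => hdown' k) hij

theorem exists_transition_of_mem_openSegment {ι : Type*} [DecidableEq ι] (R : ι → ℝ)
    (a b : ι → ι) (h : ∀ i, R i ∈ openSegment ℝ (R (a i)) (R (b i))) :
    ∃ U : ι → ι → ℝ, (∀ i j, 0 ≤ U i j) ∧ (∀ i, HasSum (U i) 1) ∧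
      (∀ i j, j ≠ a i → j ≠ b i → U i j = 0) ∧ (∀ i, 0 < U i (a i) ∧ 0 < U i (b i)) ∧
      ∀ i, HasSum (fun j => U i j * R j) (R i) := by
  choose p q hp hq hpq hR using h
  refine ⟨fun i => Pi.single (a i) (p i) + Pi.single (b i) (q i), fun i j => ?_, fun i => ?_,
    fun i j hja hjb => by simp [hja, hjb], fun i => ⟨?_, ?_⟩, fun i => ?_⟩
  · simp only [Pi.add_apply, Pi.single_apply]
    split_ifs <;> linarith [hp i, hq i]
  · exact hpq i ▸ (hasSum_pi_single (a i) (p i)).add (hasSum_pi_single (b i) (q i))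
  · simp only [Pi.add_apply, Pi.single_eq_same, Pi.single_apply]
    split_ifs <;> linarith [hp i, hq i]
  · simp only [Pi.add_apply, Pi.single_eq_same, Pi.single_apply]
    split_ifs <;> linarith [hp i, hq i]
  · have := (hasSum_pi_single (a i) (p i * R (a i))).add (hasSum_pi_single (b i) (q i * R (b i)))
    simpa [Pi.single_mul_left_apply, add_mul, ← hR i] using this

noncomputable def twoArmVec (i : ℕ) : ℝ :=
  if Even i then 1 + (1 / 2) ^ (i / 2) else 4 - (1 / 2) ^ (i / 2)

def downTarget (i : ℕ) : ℕ := if i = 0 then 1 else i - 1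

@[simp] theorem downTarget_succ (i : ℕ) : downTarget (i + 1) = i := by simp [downTarget]

theorem le_downTarget_add_one (i : ℕ) : i ≤ downTarget i + 1 := by
  unfold downTarget; split_ifs <;> omega

theorem downTarget_two_mul (k : ℕ) : downTarget (2 * k) = 2 * (k - 1) + 1 := by
  unfold downTarget; split_ifs <;> omega

theorem twoArmVec_two_mul (k : ℕ) : twoArmVec (2 * k) = 1 + (1 / 2) ^ k := by
  simp [twoArmVec]

theorem twoArmVec_two_mul_add_one (k : ℕ) : twoArmVec (2 * k + 1) = 4 - (1 / 2) ^ k := by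
  simp [twoArmVec, Nat.add_div]

theorem twoArmVec_mem_Ioc (i : ℕ) : twoArmVec i ∈ Set.Ioc 1 4 := by
  have hpos : 0 < ((1 : ℝ) / 2) ^ (i / 2) := by positivity
  have hle : ((1 : ℝ) / 2) ^ (i / 2) ≤ 1 := pow_le_one₀ (by norm_num) (by norm_num)
  unfold twoArmVec
  split_ifs <;> constructor <;> linarith

theorem twoArmVec_two_mul_lt_two_mul_add_one (k l : ℕ) :
    twoArmVec (2 * k) < twoArmVec (2 * l + 1) := by
  rw [twoArmVec_two_mul, twoArmVec_two_mul_add_one]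
  linarith [pow_le_one₀ (by norm_num : (0 : ℝ) ≤ 1 / 2) (by norm_num) (n := k),
    pow_le_one₀ (by norm_num : (0 : ℝ) ≤ 1 / 2) (by norm_num) (n := l)]

theorem twoArmVec_two_mul_add_two_lt (k : ℕ) : twoArmVec (2 * k + 2) < twoArmVec (2 * k) := by
  rw [show 2 * k + 2 = 2 * (k + 1) by ring, twoArmVec_two_mul, twoArmVec_two_mul, pow_succ]
  linarith [pow_pos (by norm_num : (0 : ℝ) < 1 / 2) k]

theorem twoArmVec_two_mul_add_one_lt (k : ℕ) :
    twoArmVec (2 * k + 1) < twoArmVec (2 * k + 1 + 2) := by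
  rw [show 2 * k + 1 + 2 = 2 * (k + 1) + 1 by ring, twoArmVec_two_mul_add_one,
    twoArmVec_two_mul_add_one, pow_succ]
  linarith [pow_pos (by norm_num : (0 : ℝ) < 1 / 2) k]

theorem twoArmVec_mem_openSegment (i : ℕ) :
    twoArmVec i ∈ openSegment ℝ (twoArmVec (downTarget i)) (twoArmVec (i + 2)) := by
  obtain ⟨k, rfl | rfl⟩ := Nat.even_or_odd' i
  · have hdown := twoArmVec_two_mul_lt_two_mul_add_one k (k - 1)
    rw [← downTarget_two_mul] at hdown
    rw [openSegment_symm, openSegment_eq_Ioo ((twoArmVec_two_mul_add_two_lt k).trans hdown)]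
    exact ⟨twoArmVec_two_mul_add_two_lt k, hdown⟩
  · have hdown := twoArmVec_two_mul_lt_two_mul_add_one k k
    have hup := twoArmVec_two_mul_add_one_lt k
    rw [downTarget_succ, openSegment_eq_Ioo (hdown.trans hup)]
    exact ⟨hdown, hup⟩

/-- Proposition 2.9: there exist an irreducible almost upper triangular transition
matrix `U` on `ℕ` and a bounded positive non-constant `R : ℕ → ℝ` which is a right
eigenvector of `U` for the eigenvalue `1`; hence some irreducible almost upper
triangular transition matrices have several positive non-proportional right
eigenvectors for the eigenvalue `1`. -/
theorem exists_aut_with_nonconstant_positive_right_eigenvector :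
    ∃ (U : ℕ → ℕ → ℝ) (R : ℕ → ℝ),
      (∀ i j, 0 ≤ U i j) ∧
      (∀ i, HasSum (fun j => U i j) 1) ∧
      (∀ i j, j + 1 < i → U i j = 0) ∧
      MatIrreducible U ∧
      (∃ C : ℝ, ∀ a, |R a| ≤ C) ∧
      (∀ a, 0 < R a) ∧
      (∃ a b, R a ≠ R b) ∧
      (∀ a, HasSum (fun j => U a j * R j) (R a)) := by
  obtain ⟨U, hU_nonneg, hU_row, hU_supp, hU_pos, hU_eigen⟩ :=
    exists_transition_of_mem_openSegment twoArmVec downTarget (· + 2) twoArmVec_mem_openSegment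
  have hR_pos (a : ℕ) : 0 < twoArmVec a := one_pos.trans (twoArmVec_mem_Ioc a).1
  refine ⟨U, twoArmVec, hU_nonneg, hU_row,
    fun i j hji => hU_supp i j (by have := le_downTarget_add_one i; omega) (by omega), ?_,
    ⟨4, fun a => (abs_of_pos (hR_pos a)).trans_le (twoArmVec_mem_Ioc a).2⟩, hR_pos,
    ⟨0, 1, by norm_num [twoArmVec]⟩, hU_eigen⟩
  refine matIrreducible_of_succ (fun i => ?_) (fun i => by simpa using (hU_pos (i + 1)).1)
  rcases i with _ | i
  · exact .single (hU_pos 0).1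
  · exact .head (hU_pos (i + 1)).2 (.single (by simpa using (hU_pos (i + 3)).1))
end

section
/- Let L be an irreducible almost lower triangular transition matrix on ℕ. If R : ℕ → ℝ satisfies ∑_{j=0}^{i+1} L i j · R j = R i for every i ∈ ℕ (these are finite sums since L i j = 0 for j > i + 1), then R is constant: R i = R 0 for every i. Thus, up to a multiplicative constant, the unique right eigenvector of L associated with the eigenvalue 1 is the all-ones vector. -/
theorem HasSum.sum_range_eq_of_eq_zero {M : Type*} [AddCommMonoid M] [TopologicalSpace M]
    [T2Space M] {f : ℕ → M} {a : M} {n : ℕ} (hf : HasSum f a) (hzero : ∀ j, n ≤ j → f j = 0) :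
    ∑ j ∈ Finset.range n, f j = a :=
  (hasSum_sum_of_ne_finset_zero fun j hj => hzero j (by simpa using hj)).unique hf

theorem Nat.exists_le_lt_succ_of_le_of_lt (x : ℕ → ℕ) {i n : ℕ} (h₀ : x 0 ≤ i) (hn : i < x n) :
    ∃ k < n, x k ≤ i ∧ i < x (k + 1) := by
  induction n with
  | zero => omega
  | succ n ih =>
    by_cases hxn : x n ≤ i
    · exact ⟨n, n.lt_succ_self, hxn, hn⟩
    · obtain ⟨k, hk, hk'⟩ := ih (by omega)
      exact ⟨k, by omega, hk'⟩

theorem MatIrreducible.superdiag_pos {M : ℕ → ℕ → ℝ} (hirr : MatIrreducible M)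
    (hlt : ∀ i j, i + 1 < j → M i j = 0) (i : ℕ) : 0 < M i (i + 1) := by
  obtain ⟨n, x, -, hx0, hxn, hstep⟩ := hirr i (i + 1)
  obtain ⟨k, hk, hle, hgt⟩ := Nat.exists_le_lt_succ_of_le_of_lt x hx0.le (by omega : i < x n)
  have hjump : x (k + 1) ≤ x k + 1 := by
    by_contra! h
    exact (hstep k hk).ne' (hlt _ _ h)
  have hxk : x k = i := by omega
  have hxk1 : x (k + 1) = i + 1 := by omega
  simpa [hxk, hxk1] using hstep k hk

theorem eq_of_sum_range_mul_eq_of_superdiag_ne_zero {L : ℕ → ℕ → ℝ} {R : ℕ → ℝ} {c : ℝ} {m : ℕ}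
    (hrow : ∑ j ∈ Finset.range (m + 2), L m j = 1)
    (hR : ∑ j ∈ Finset.range (m + 2), L m j * R j = R m)
    (hconst : ∀ j ≤ m, R j = c) (hsuper : L m (m + 1) ≠ 0) :
    R (m + 1) = c := by
  have hlower : ∑ j ∈ Finset.range (m + 1), L m j * R j
      = (∑ j ∈ Finset.range (m + 1), L m j) * c := by
    rw [Finset.sum_mul]
    exact Finset.sum_congr rfl fun j hj => by
      rw [hconst j (Nat.lt_succ_iff.mp (Finset.mem_range.mp hj))]
  rw [Finset.sum_range_succ] at hrow hR
  rw [hlower, hconst m le_rfl] at hR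
  have hkernel : L m (m + 1) * (R (m + 1) - c) = 0 := by linear_combination hR - c * hrow
  exact sub_eq_zero.mp ((mul_eq_zero.mp hkernel).resolve_left hsuper)

theorem right_eigenvector_constant_almost_lower_triangular_general (L : ℕ → ℕ → ℝ)
    (hrow : ∀ i, HasSum (fun j => L i j) 1)
    (hlt : ∀ i j, i + 1 < j → L i j = 0)
    (hirr : MatIrreducible L)
    (R : ℕ → ℝ)
    (hR : ∀ i, ∑ j ∈ Finset.range (i + 2), L i j * R j = R i) :
    ∀ i, R i = R 0 := by
  have hrow_fin (i : ℕ) : ∑ j ∈ Finset.range (i + 2), L i j = 1 :=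
    (hrow i).sum_range_eq_of_eq_zero fun j hj => hlt i j (by omega)
  intro i
  induction i using Nat.strong_induction_on with
  | _ i ih =>
    match i with
    | 0 => rfl
    | m + 1 =>
      exact eq_of_sum_range_mul_eq_of_superdiag_ne_zero (hrow_fin m) (hR m)
        (fun j hj => ih j (by omega)) (hirr.superdiag_pos hlt m).ne'

/-- Theorem 3.1 (i): for an irreducible almost lower triangular transition matrix `L`
on `ℕ`, any right eigenvector for the eigenvalue `1` is constant; in particular the
all-ones vector is, up to a multiplicative constant, the only one. -/
theorem right_eigenvector_constant_almost_lower_triangular (L : ℕ → ℕ → ℝ)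
    (hnn : ∀ i j, 0 ≤ L i j)
    (hrow : ∀ i, HasSum (fun j => L i j) 1)
    (hlt : ∀ i j, i + 1 < j → L i j = 0)
    (hirr : MatIrreducible L)
    (R : ℕ → ℝ)
    (hR : ∀ i, ∑ j ∈ Finset.range (i + 2), L i j * R j = R i) :
    ∀ i, R i = R 0 :=
  right_eigenvector_constant_almost_lower_triangular_general L hrow hlt hirr R hR
end

section
/- There exists an irreducible almost lower triangular transition matrix L on ℕ that admits no invariant measure: there is no π : ℕ → ℝ with π a ≥ 0 for all a, π not identically 0, such that for every b the series ∑_a π a · L a b converges with sum π b. (An explicit example: L 0 1 = 1 and, for i ≥ 1, L i (i+1) = 1 − 1/(i+1)² and L i 0 = 1/(i+1)², all other entries being 0.) -/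
/-- Up-probability. -/
noncomputable def pfun (i : ℕ) : ℝ := if i = 0 then 1 else 1 - 1 / (i + 1) ^ 2

/-- Down-probability. -/
noncomputable def qfun (i : ℕ) : ℝ := if i = 0 then 0 else 1 / (i + 1) ^ 2

noncomputable def Lmat (i j : ℕ) : ℝ :=
  (if j = i + 1 then pfun i else 0) + (if j = 0 then qfun i else 0)

lemma pfun_pos (i : ℕ) : 0 < pfun i := by
  unfold pfun
  rcases Nat.eq_zero_or_pos i with h | h
  · simp [h]
  · rw [if_neg h.ne']
    have hi : (1:ℝ) ≤ (i:ℝ) := by exact_mod_cast h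
    have h2 : (1:ℝ) < ((i:ℝ) + 1) ^ 2 := by nlinarith
    have : 1 / ((i:ℝ) + 1) ^ 2 < 1 := by
      rw [div_lt_one (by positivity)]; exact h2
    linarith

lemma qfun_nonneg (i : ℕ) : 0 ≤ qfun i := by
  unfold qfun; split <;> positivity

lemma qfun_pos {i : ℕ} (h : i ≠ 0) : 0 < qfun i := by
  unfold qfun; rw [if_neg h]; positivity

lemma pq_sum (i : ℕ) : pfun i + qfun i = 1 := by
  unfold pfun qfun; split <;> ring

lemma hasSum_telescope : HasSum (fun n : ℕ => (1:ℝ) / ((n + 1) * (n + 2))) 1 := by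
  rw [hasSum_iff_tendsto_nat_of_nonneg (fun i => by positivity)]
  have key : ∀ n : ℕ, ∑ i ∈ Finset.range n, (1:ℝ) / ((i + 1) * (i + 2)) = 1 - 1 / (n + 1) := by
    intro n
    induction n with
    | zero => simp
    | succ n ih =>
      rw [Finset.sum_range_succ, ih]
      have h1 : ((n:ℝ) + 1) ≠ 0 := by positivity
      have h2 : ((n:ℝ) + 2) ≠ 0 := by positivity
      push_cast
      field_simp
      ring
  simp only [key]
  have : Filter.Tendsto (fun n : ℕ => 1 / ((n:ℝ) + 1)) Filter.atTop (nhds 0) :=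
    tendsto_one_div_add_atTop_nhds_zero_nat
  have := Filter.Tendsto.const_sub (1:ℝ) this
  simpa using this

/-- Theorem 3.1 (ii)(a): there exists an irreducible almost lower triangular
transition matrix on `ℕ` which admits no invariant measure. -/
theorem exists_alt_without_invariant_measure :
    ∃ L : ℕ → ℕ → ℝ,
      (∀ i j, 0 ≤ L i j) ∧
      (∀ i, HasSum (fun j => L i j) 1) ∧
      (∀ i j, i + 1 < j → L i j = 0) ∧
      MatIrreducible L ∧
      ¬ ∃ pi : ℕ → ℝ, (∀ a, 0 ≤ pi a) ∧ (∃ a, pi a ≠ 0) ∧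
          ∀ b, HasSum (fun a => pi a * L a b) (pi b) := by
  refine ⟨Lmat, ?_, ?_, ?_, ?_, ?_⟩
  · intro i j
    unfold Lmat
    have := (pfun_pos i).le
    have := qfun_nonneg i
    split <;> split <;> simp_all
  · intro i
    have h1 : HasSum (fun j : ℕ => if j = i + 1 then pfun i else 0) (pfun i) :=
      hasSum_ite_eq (i + 1) (pfun i)
    have h2 : HasSum (fun j : ℕ => if j = 0 then qfun i else 0) (qfun i) :=
      hasSum_ite_eq 0 (qfun i)
    have := h1.add h2
    rw [pq_sum] at this
    exact this
  · intro i j hij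
    unfold Lmat
    rw [if_neg (by omega), if_neg (by omega)]
    ring
  · intro i j
    refine ⟨j + 2, fun k => if k = 0 then i else if k = 1 then i + 1 else k - 2,
      by omega, rfl, by simp, ?_⟩
    have hup : ∀ m : ℕ, 0 < Lmat m (m + 1) := by
      intro m
      unfold Lmat
      rw [if_pos rfl, if_neg (by omega)]
      simpa using pfun_pos m
    have hdown : ∀ m : ℕ, m ≠ 0 → 0 < Lmat m 0 := by
      intro m hm
      unfold Lmat
      rw [if_neg (by omega), if_pos rfl]
      simpa using qfun_pos hm
    intro k hk
    rcases Nat.eq_zero_or_pos k with rfl | hk0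
    · simpa using hup i
    rcases Nat.eq_or_lt_of_le hk0 with h1 | h2
    · simp only [← h1]
      norm_num
      exact hdown (i + 1) (by omega)
    · have hk1 : k ≠ 0 := by omega
      have hk2 : k ≠ 1 := by omega
      simp only [if_neg hk1, if_neg hk2, if_neg (by omega : ¬ k + 1 = 0),
        if_neg (by omega : ¬ k + 1 = 1)]
      have : k + 1 - 2 = (k - 2) + 1 := by omega
      rw [this]
      exact hup (k - 2)
  · rintro ⟨pi, hpos, ⟨a, ha⟩, hinv⟩
    -- recurrence: pi (b) = pi (b-1) * pfun (b-1) for b ≥ 1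
    have hrec : ∀ b : ℕ, pi (b + 1) = pi b * pfun b := by
      intro b
      have h := hinv (b + 1)
      have heq : (fun a => pi a * Lmat a (b + 1)) =
          fun a => if a = b then pi b * pfun b else 0 := by
        funext c
        unfold Lmat
        by_cases hc : c = b
        · subst hc; simp
        · rw [if_neg hc, if_neg (by omega), if_neg (by omega)]; ring
      rw [heq] at h
      exact h.unique (hasSum_ite_eq b (pi b * pfun b))
    -- explicit formula: pi (n+1) = pi 0 * (n+2) / (2*(n+1))
    have hform : ∀ n : ℕ, pi (n + 1) = pi 0 * ((n + 2) / (2 * (n + 1))) := by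
      intro n
      induction n with
      | zero => rw [hrec 0]; unfold pfun; norm_num
      | succ n ih =>
        rw [hrec (n + 1), ih]
        unfold pfun
        rw [if_neg (by omega)]
        have h1 : ((n:ℝ) + 1) ≠ 0 := by positivity
        have h2 : ((n:ℝ) + 2) ≠ 0 := by positivity
        push_cast
        field_simp
        ring
    -- column 0 equation
    have h0 := hinv 0
    have heq0 : (fun a => pi a * Lmat a 0) =
        fun a : ℕ => if a = 0 then 0 else pi 0 * (1 / ((a:ℝ) * ((a:ℝ) + 1))) / 2 := by
      funext c
      unfold Lmat qfun
      rw [if_neg (by omega)]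
      rcases Nat.eq_zero_or_pos c with rfl | hc
      · simp
      · rw [if_pos rfl, if_neg hc.ne', if_neg hc.ne']
        obtain ⟨m, rfl⟩ := Nat.exists_eq_succ_of_ne_zero hc.ne'
        rw [hform m]
        have h1 : ((m:ℝ) + 1) ≠ 0 := by positivity
        have h2 : ((m:ℝ) + 2) ≠ 0 := by positivity
        push_cast
        field_simp
        ring
    rw [heq0] at h0
    -- the shifted series sums to pi 0 / 2
    have hs : HasSum (fun n : ℕ => pi 0 * (1 / (((n:ℝ) + 1) * ((n:ℝ) + 2))) / 2) (pi 0 / 2) := by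
      have := (hasSum_telescope.mul_left (pi 0)).div_const 2
      simpa [mul_div_assoc] using this
    have hs' : HasSum (fun a : ℕ => if a = 0 then (0:ℝ)
        else pi 0 * (1 / ((a:ℝ) * ((a:ℝ) + 1))) / 2) (pi 0 / 2) := by
      have hshift : HasSum (fun n : ℕ => (fun a : ℕ => if a = 0 then (0:ℝ)
          else pi 0 * (1 / ((a:ℝ) * ((a:ℝ) + 1))) / 2) (n + 1)) (pi 0 / 2) := by
        convert hs using 2 with n
        simp only [show n + 1 ≠ 0 from by omega, if_false, ite_false]
        push_cast
        ring_nf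
      have h := (hasSum_nat_add_iff
        (f := fun a : ℕ => if a = 0 then (0:ℝ)
          else pi 0 * (1 / ((a:ℝ) * ((a:ℝ) + 1))) / 2) 1).mp hshift
      simpa using h
    have hhalf : pi 0 = pi 0 / 2 := h0.unique hs'
    have hzero : pi 0 = 0 := by linarith
    -- all entries vanish
    have hall : ∀ n, pi n = 0 := by
      intro n
      cases n with
      | zero => exact hzero
      | succ m => rw [hform m, hzero]; ring
    exact ha (hall a)
end

section
/- There exists an irreducible almost lower triangular transition matrix L on ℕ that admits several non-proportional invariant measures: there exist π, π' : ℕ → ℝ with π a > 0 and π' a > 0 for all a, both invariant for L, such that π' is not a scalar multiple of π. -/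
open Relation

theorem MatIrreducible.of_transGen {M : ℕ → ℕ → ℝ}
    (hM : ∀ i j, TransGen (fun a b => 0 < M a b) i j) : MatIrreducible M := by
  intro i j
  induction hM i j with
  | @single b hib =>
    exact ⟨1, fun k => if k = 0 then i else b, one_pos, rfl, rfl, fun k hk => by
      simpa [Nat.lt_one_iff.mp hk] using hib⟩
  | @tail b c _ hbc ih =>
    obtain ⟨n, x, hn, hx0, hxn, hx⟩ := ih
    refine ⟨n + 1, fun k => if k ≤ n then x k else c, n.succ_pos, by simpa using hx0,
      by simp, fun k hk => ?_⟩
    rcases Nat.lt_succ_iff_lt_or_eq.mp hk with hk | rfl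
    · simpa [hk.le, Nat.succ_le_of_lt hk] using hx k hk
    · simpa [hxn] using hbc

theorem MatIrreducible.of_succ_of_add_two {M : ℕ → ℕ → ℝ} (hup : ∀ a, 0 < M a (a + 1))
    (hdown : ∀ a, 0 < M (a + 2) a) : MatIrreducible M := by
  have up : ∀ a k, TransGen (fun a b => 0 < M a b) a (a + k + 1) := by
    intro a k
    induction k with
    | zero => exact .single (hup a)
    | succ k ih => exact ih.tail (hup _)
  have down : ∀ b k, ReflTransGen (fun a b => 0 < M a b) (b + 2 * k) b := by
    intro b k
    induction k with
    | zero => exact .refl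
    | succ k ih => exact .head (by simpa [mul_add, ← add_assoc] using hdown (b + 2 * k)) ih
  refine MatIrreducible.of_transGen fun i j => (up i (i + j + 1)).trans_left ?_
  simpa [show i + (i + j + 1) + 1 = j + 2 * (i + 1) by ring] using down j (i + 1)

namespace TransitionMatrix

variable {α : Type*}

def IsInvariant (K : α → α → ℝ) (μ : α → ℝ) : Prop :=
  ∀ b, HasSum (fun a => μ a * K a b) (μ b)

def IsHarmonic (K : α → α → ℝ) (f : α → ℝ) : Prop :=
  ∀ a, HasSum (fun b => K a b * f b) (f a)

noncomputable def reversal (μ : α → ℝ) (K : α → α → ℝ) (a b : α) : ℝ :=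
  μ b * K b a / μ a

variable {μ f : α → ℝ} {K : α → α → ℝ}

theorem reversal_nonneg (hμ : ∀ a, 0 ≤ μ a) (hK : ∀ a b, 0 ≤ K a b) (a b : α) :
    0 ≤ reversal μ K a b :=
  div_nonneg (mul_nonneg (hμ b) (hK b a)) (hμ a)

theorem reversal_pos {a b : α} (ha : 0 < μ a) (hb : 0 < μ b) (hK : 0 < K b a) :
    0 < reversal μ K a b :=
  div_pos (mul_pos hb hK) ha

theorem reversal_eq_zero {a b : α} (hK : K b a = 0) : reversal μ K a b = 0 := by
  simp [reversal, hK]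

theorem hasSum_reversal (hμ : IsInvariant K μ) {a : α} (ha : μ a ≠ 0) :
    HasSum (reversal μ K a) 1 := by
  show HasSum (fun b => μ b * K b a / μ a) 1
  simpa [div_self ha] using (hμ a).div_const (μ a)

theorem isInvariant_reversal (hμ : ∀ a, μ a ≠ 0) (hK : ∀ a, HasSum (K a) 1) :
    IsInvariant (reversal μ K) μ := by
  intro b
  have h (a : α) : μ a * reversal μ K a b = μ b * K b a := by
    rw [reversal, mul_div_cancel₀ _ (hμ a)]
  simpa [h] using (hK b).mul_left (μ b)

theorem IsHarmonic.isInvariant_mul_reversal (hμ : ∀ a, μ a ≠ 0) (hf : IsHarmonic K f) :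
    IsInvariant (reversal μ K) (μ * f) := by
  intro b
  have h (a : α) : μ a * f a * reversal μ K a b = μ b * (K b a * f a) := by
    rw [reversal]
    field_simp [hμ a]
  simpa only [Pi.mul_apply, h] using (hf b).mul_left (μ b)

theorem not_exists_mul_eq_mul {x y : α} (hμ : ∀ a, μ a ≠ 0) (hf : f x ≠ f y) :
    ¬ ∃ c : ℝ, ∀ a, (μ * f) a = c * μ a := by
  rintro ⟨c, hc⟩
  have hc' : ∀ a, f a = c := fun a =>
    mul_left_cancel₀ (hμ a) (by rw [← Pi.mul_apply, hc, mul_comm])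
  exact hf (by rw [hc', hc'])

end TransitionMatrix

open TransitionMatrix

theorem hasSum_pair {β M : Type*} [DecidableEq β] [AddCommMonoid M] [TopologicalSpace M]
    {f : β → M} {x y : β} (hxy : x ≠ y) (hf : ∀ a, a ≠ x → a ≠ y → f a = 0) :
    HasSum f (f x + f y) := by
  simpa [Finset.sum_pair hxy] using hasSum_sum_of_ne_finset_zero (s := {x, y}) (by
    intro a ha
    simp only [Finset.mem_insert, Finset.mem_singleton, not_or] at ha
    exact hf a ha.1 ha.2)

section UpTwoDownOne

variable {p : ℕ → ℝ}

/-- Because `0 - 1 = 0` in `ℕ`, the downward jump from `0` is a stay at `0`. -/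
noncomputable def upTwoDownOne (p : ℕ → ℝ) (n m : ℕ) : ℝ :=
  if m = n + 2 then 1 - p n else if m = n - 1 then p n else 0

theorem upTwoDownOne_eq_zero {n m : ℕ} (h₁ : m ≠ n + 2) (h₂ : m ≠ n - 1) :
    upTwoDownOne p n m = 0 := by
  simp [upTwoDownOne, h₁, h₂]

theorem upTwoDownOne_add_two (n : ℕ) : upTwoDownOne p n (n + 2) = 1 - p n := by
  simp [upTwoDownOne]

theorem upTwoDownOne_sub_one (n : ℕ) : upTwoDownOne p n (n - 1) = p n := by
  simp [upTwoDownOne]; omega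

theorem upTwoDownOne_succ_self (n : ℕ) : upTwoDownOne p (n + 1) n = p (n + 1) :=
  upTwoDownOne_sub_one (n + 1)

theorem upTwoDownOne_zero_zero : upTwoDownOne p 0 0 = p 0 :=
  upTwoDownOne_sub_one 0

theorem upTwoDownOne_nonneg (hp₀ : ∀ n, 0 ≤ p n) (hp₁ : ∀ n, p n ≤ 1) (n m : ℕ) :
    0 ≤ upTwoDownOne p n m := by
  unfold upTwoDownOne
  split_ifs
  · exact sub_nonneg.mpr (hp₁ n)
  · exact hp₀ n
  · exact le_rfl

theorem hasSum_upTwoDownOne_mul (f : ℕ → ℝ) (n : ℕ) :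
    HasSum (fun m => upTwoDownOne p n m * f m) ((1 - p n) * f (n + 2) + p n * f (n - 1)) := by
  convert hasSum_pair (f := fun m => upTwoDownOne p n m * f m) (x := n + 2) (y := n - 1)
    (by omega) (fun m h₁ h₂ => by simp [upTwoDownOne_eq_zero h₁ h₂]) using 1
  simp [upTwoDownOne_add_two, upTwoDownOne_sub_one]

theorem hasSum_upTwoDownOne (n : ℕ) : HasSum (upTwoDownOne p n) 1 := by
  simpa using hasSum_upTwoDownOne_mul (p := p) 1 n

/-- Balances the flow across each cut `{0, …, n} | {n + 1, …}`: down `p (n + 1) * μ (n + 1)`,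
up `(1 - p n) * μ n + (1 - p (n - 1)) * μ (n - 1)` (no second term for `n = 0`). -/
noncomputable def stationaryMeasure (p : ℕ → ℝ) : ℕ → ℝ
  | 0 => 1
  | 1 => (1 - p 0) / p 1
  | n + 2 => ((1 - p n) * stationaryMeasure p n
      + (1 - p (n + 1)) * stationaryMeasure p (n + 1)) / p (n + 2)

theorem stationaryMeasure_pos (hp₀ : ∀ n, 0 < p n) (hp₁ : ∀ n, p n < 1) (n : ℕ) :
    0 < stationaryMeasure p n := by
  induction n using Nat.twoStepInduction with
  | zero => simp [stationaryMeasure]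
  | one => exact div_pos (sub_pos.mpr (hp₁ 0)) (hp₀ 1)
  | more n ih₀ ih₁ =>
    have := sub_pos.mpr (hp₁ n)
    have := sub_pos.mpr (hp₁ (n + 1))
    exact div_pos (by positivity) (hp₀ (n + 2))

theorem isInvariant_stationaryMeasure (hp : ∀ n, p n ≠ 0) :
    IsInvariant (upTwoDownOne p) (stationaryMeasure p) := by
  set μ := stationaryMeasure p
  have cut₁ : p 1 * μ 1 = (1 - p 0) * μ 0 := by
    simp [μ, stationaryMeasure, mul_div_cancel₀ _ (hp 1)]
  have cut (n : ℕ) : p (n + 2) * μ (n + 2) = (1 - p n) * μ n + (1 - p (n + 1)) * μ (n + 1) :=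
    mul_div_cancel₀ _ (hp (n + 2))
  have off {a b : ℕ} (h₁ : b ≠ a + 2) (h₂ : b ≠ a - 1) :
      μ a * upTwoDownOne p a b = 0 := by
    rw [upTwoDownOne_eq_zero h₁ h₂, mul_zero]
  intro b
  match b with
  | 0 =>
    convert hasSum_pair (f := fun a => μ a * upTwoDownOne p a 0) zero_ne_one
      (fun a h₀ h₁ => off (by omega) (by omega)) using 1
    rw [upTwoDownOne_zero_zero,
      show upTwoDownOne p 1 0 = p 1 from upTwoDownOne_succ_self 0]
    linear_combination -cut₁
  | 1 =>
    convert hasSum_single (f := fun a => μ a * upTwoDownOne p a 1) 2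
      (fun a h₂ => off (by omega) (by omega)) using 1
    simp only [upTwoDownOne_succ_self]
    linear_combination cut₁ - cut 0
  | c + 2 =>
    convert hasSum_pair (f := fun a => μ a * upTwoDownOne p a (c + 2)) (x := c) (y := c + 3)
      (by omega) (fun a h₀ h₁ => off (by omega) (by omega)) using 1
    rw [upTwoDownOne_add_two, upTwoDownOne_succ_self]
    linear_combination cut c - cut (c + 1)

end UpTwoDownOne

section StrictlyBetween

variable {𝕜 : Type*} [Field 𝕜] [LinearOrder 𝕜] [IsStrictOrderedRing 𝕜] {x y z : 𝕜}

theorem div_sub_pos_of_mul_pos (h : 0 < (z - y) * (y - x)) : 0 < (z - y) / (z - x) := by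
  rcases mul_pos_iff.mp h with ⟨h₁, h₂⟩ | ⟨h₁, h₂⟩
  · exact div_pos h₁ (by linarith)
  · exact div_pos_of_neg_of_neg h₁ (by linarith)

theorem div_sub_lt_one_of_mul_pos (h : 0 < (z - y) * (y - x)) : (z - y) / (z - x) < 1 := by
  rcases mul_pos_iff.mp h with ⟨h₁, h₂⟩ | ⟨h₁, h₂⟩
  · exact (div_lt_one (by linarith)).mpr (by linarith)
  · exact (div_lt_one_of_neg (by linarith)).mpr (by linarith)

theorem sub_ne_zero_of_mul_pos (h : 0 < (z - y) * (y - x)) : z - x ≠ 0 :=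
  fun hzx => (div_sub_pos_of_mul_pos h).ne' (by rw [hzx, div_zero])

end StrictlyBetween

section HarmonicDownProb

variable {h : ℕ → ℝ}

/-- At `n + 1` this is the weight making `h (n + 1)` the average of `h n` and `h (n + 3)`;
at `0` any weight does once `h 2 = h 0`. -/
noncomputable def harmonicDownProb (h : ℕ → ℝ) : ℕ → ℝ
  | 0 => 1 / 2
  | n + 1 => (h (n + 3) - h (n + 1)) / (h (n + 3) - h n)

theorem harmonicDownProb_pos (hh : ∀ n, 0 < (h (n + 3) - h (n + 1)) * (h (n + 1) - h n))
    (n : ℕ) : 0 < harmonicDownProb h n := by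
  cases n with
  | zero => norm_num [harmonicDownProb]
  | succ n => exact div_sub_pos_of_mul_pos (hh n)

theorem harmonicDownProb_lt_one (hh : ∀ n, 0 < (h (n + 3) - h (n + 1)) * (h (n + 1) - h n))
    (n : ℕ) : harmonicDownProb h n < 1 := by
  cases n with
  | zero => norm_num [harmonicDownProb]
  | succ n => exact div_sub_lt_one_of_mul_pos (hh n)

theorem isHarmonic_upTwoDownOne_harmonicDownProb (h₀ : h 2 = h 0)
    (hh : ∀ n, h (n + 3) - h n ≠ 0) : IsHarmonic (upTwoDownOne (harmonicDownProb h)) h := by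
  intro n
  convert hasSum_upTwoDownOne_mul h n using 1
  cases n with
  | zero => simp [h₀]; ring
  | succ n =>
    have := hh n
    simp only [harmonicDownProb, add_tsub_cancel_right]
    field_simp
    ring

end HarmonicDownProb

/-- `zigzag 0 = zigzag 2`, as harmonicity at `0` requires. -/
noncomputable def zigzag : ℕ → ℝ
  | 0 => 7 / 4
  | n + 1 => if Even n then (1 / 2) ^ (n + 1) else 2 - (1 / 2) ^ (n + 1)

theorem zigzag_pos (n : ℕ) : 0 < zigzag n := by
  cases n with
  | zero => norm_num [zigzag]
  | succ n =>
    have : ((1 : ℝ) / 2) ^ (n + 1) ≤ 1 := pow_le_one₀ (by norm_num) (by norm_num)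
    rw [zigzag]
    split_ifs
    · positivity
    · linarith

theorem zigzag_strictly_between (n : ℕ) :
    0 < (zigzag (n + 3) - zigzag (n + 1)) * (zigzag (n + 1) - zigzag n) := by
  cases n with
  | zero => norm_num [zigzag]
  | succ n =>
    have hx : 0 < ((1 : ℝ) / 2) ^ (n + 1) := by positivity
    have hx' : ((1 : ℝ) / 2) ^ (n + 1) ≤ 1 / 2 :=
      pow_le_of_le_one (by norm_num) (by norm_num) n.succ_ne_zero
    rcases Nat.even_or_odd n with hn | hn
    · simp only [zigzag, Nat.even_add_one, hn, not_true_eq_false, not_false_eq_true,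
        ↓reduceIte, pow_succ] at hx hx' ⊢
      nlinarith
    · simp only [zigzag, Nat.even_add_one, Nat.not_even_iff_odd.mpr hn, not_true_eq_false,
        not_false_eq_true, ↓reduceIte, pow_succ] at hx hx' ⊢
      nlinarith

/-- Theorem 3.1 (ii)(c): there exists an irreducible almost lower triangular transition
matrix on `ℕ` admitting several non-proportional (positive) invariant measures. -/
theorem exists_alt_with_several_invariant_measures :
    ∃ (L : ℕ → ℕ → ℝ) (pi pi' : ℕ → ℝ),
      (∀ i j, 0 ≤ L i j) ∧
      (∀ i, HasSum (fun j => L i j) 1) ∧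
      (∀ i j, i + 1 < j → L i j = 0) ∧
      MatIrreducible L ∧
      (∀ a, 0 < pi a) ∧ (∀ a, 0 < pi' a) ∧
      (∀ b, HasSum (fun a => pi a * L a b) (pi b)) ∧
      (∀ b, HasSum (fun a => pi' a * L a b) (pi' b)) ∧
      ¬ ∃ c : ℝ, ∀ a, pi' a = c * pi a := by
  set p := harmonicDownProb zigzag
  have hp₀ : ∀ n, 0 < p n := harmonicDownProb_pos zigzag_strictly_between
  have hp₁ : ∀ n, p n < 1 := harmonicDownProb_lt_one zigzag_strictly_between
  set K := upTwoDownOne p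
  set μ := stationaryMeasure p
  have hμ : ∀ n, 0 < μ n := stationaryMeasure_pos hp₀ hp₁
  have hμ₀ : ∀ n, μ n ≠ 0 := fun n => (hμ n).ne'
  have hK : IsHarmonic K zigzag :=
    isHarmonic_upTwoDownOne_harmonicDownProb (by norm_num [zigzag]) fun n =>
      sub_ne_zero_of_mul_pos (zigzag_strictly_between n)
  refine ⟨reversal μ K, μ, μ * zigzag,
    reversal_nonneg (fun n => (hμ n).le)
      (upTwoDownOne_nonneg (fun n => (hp₀ n).le) fun n => (hp₁ n).le),
    fun a => hasSum_reversal (isInvariant_stationaryMeasure fun n => (hp₀ n).ne') (hμ₀ a),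
    fun i j hij => reversal_eq_zero (upTwoDownOne_eq_zero (by omega) (by omega)),
    MatIrreducible.of_succ_of_add_two ?_ ?_, hμ, fun a => mul_pos (hμ a) (zigzag_pos a),
    isInvariant_reversal hμ₀ hasSum_upTwoDownOne, hK.isInvariant_mul_reversal hμ₀,
    not_exists_mul_eq_mul (x := 0) (y := 1) hμ₀ (by norm_num [zigzag])⟩
  · exact fun a => reversal_pos (hμ a) (hμ _) ((upTwoDownOne_succ_self a).trans_gt (hp₀ _))
  · exact fun a => reversal_pos (hμ _) (hμ a)
      ((upTwoDownOne_add_two a).trans_gt (sub_pos.mpr (hp₁ a)))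
end

section
/- Let L be an irreducible almost lower triangular transition matrix on ℕ, let 0 < x < b be integers, and let μ be the law of the L-Markov chain started at x. Then the probability that the chain hits b strictly before hitting 0, namely μ{ω : ∃ n ≥ 1, ω n = b and 1 ≤ ω m ≤ b−1 for all 1 ≤ m < n}, equals (det(Id − L_{[1,x−1]}) / det(Id − L_{[1,b−1]})) · ∏_{j=x}^{b−1} L j (j+1), with the convention det(Id − L_{[a,c]}) = 1 when a > c. -/
/-- `detOneSubI M a b = det(Id − M_{[a,b]})`, equal to `1` when `a > b`. -/
noncomputable def detOneSubI (M : ℕ → ℕ → ℝ) (a b : ℕ) : ℝ :=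
  Matrix.det (1 - Matrix.of fun i j : Fin (b + 1 - a) => M (a + i.1) (a + j.1))

def IsMarkovLaw (M : ℕ → ℕ → ℝ) (s : ℕ) (μ : MeasureTheory.Measure (ℕ → ℕ)) : Prop :=
  MeasureTheory.IsProbabilityMeasure μ ∧
    ∀ (n : ℕ) (x : ℕ → ℕ),
      μ {ω | ∀ k ≤ n, ω k = x k} =
        ENNReal.ofReal
          ((if x 0 = s then (1 : ℝ) else 0) * ∏ k ∈ Finset.range n, M (x k) (x (k + 1)))

/-!
Split the event according to the hitting time `n + 1`: the chain stays in the interior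
`[1, b - 1]` up to time `n` and then jumps to `b`, which for an almost lower triangular `L`
is only possible from `b - 1`. Summing over interior paths, this has probability
`(Qⁿ)_{x, b-1} L(b-1, b)`, where `Q` is `L` restricted to the interior. Irreducibility lets
every interior state leak mass out of the interior; hence a fixed vector of `Q` cannot attain its
maximal modulus anywhere, so `1 - Q` is invertible and `∑ Qⁿ = (1 - Q)⁻¹`. The last column of
`(1 - Q)⁻¹` consists of cofactors of the Hessenberg matrix `1 - Q`, and each such cofactor is a
leading principal minor times a product of superdiagonal entries.
-/

open Matrix Finset MeasureTheory

section Hessenberg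

variable {R : Type*} [CommRing R]

def leadingMinor (f : ℕ → ℕ → R) (k : ℕ) : R :=
  (of fun i j : Fin k => f i j).det

variable {f : ℕ → ℕ → R}

theorem det_submatrix_castSucc_succAbove_of_hessenberg (hf : ∀ i j, i + 1 < j → f i j = 0)
    (n : ℕ) (j : Fin (n + 1)) :
    ((of fun i k : Fin (n + 1) => f i k).submatrix Fin.castSucc j.succAbove).det =
      leadingMinor f j * ∏ k ∈ Ico (j : ℕ) n, f k (k + 1) := by
  induction n with
  | zero =>
    obtain rfl : j = 0 := Fin.fin_one_eq_zero j
    simp [leadingMinor]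
  | succ n ih =>
    rcases eq_or_ne j (Fin.last (n + 1)) with rfl | hj
    · simp [leadingMinor, submatrix]
    obtain ⟨j, rfl⟩ := Fin.exists_castSucc_eq.mpr hj
    have hlast : j.castSucc.succAbove (Fin.last n) = Fin.last (n + 1) := by
      rw [Fin.succAbove_castSucc_of_le _ _ (Fin.le_last j), Fin.succ_last]
    -- expand along the last column, where only the bottom entry `f n (n + 1)` survives
    rw [det_succ_column _ (Fin.last n), Fintype.sum_eq_single (Fin.last n)]
    · have hminor : ((of fun i k : Fin (n + 2) => f i k).submatrix Fin.castSucc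
            j.castSucc.succAbove).submatrix (Fin.last n).succAbove (Fin.last n).succAbove =
          (of fun i k : Fin (n + 1) => f i k).submatrix Fin.castSucc j.succAbove := by
        ext r c
        simp [Fin.succAbove_last]
      rw [hminor, ih, Fin.val_castSucc, prod_Ico_succ_top (Nat.lt_succ_iff.mp j.isLt)]
      simp [hlast, ← two_mul, pow_mul]
      ring
    · intro i hi
      have hi' : (i : ℕ) < n := Fin.val_lt_last hi
      simp [hlast, hf i (n + 1) (by omega)]

theorem adjugate_apply_last_of_hessenberg (hf : ∀ i j, i + 1 < j → f i j = 0)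
    (n : ℕ) (j : Fin (n + 1)) :
    adjugate (of fun i k : Fin (n + 1) => f i k) j (Fin.last n) =
      leadingMinor f j * ∏ k ∈ Ico (j : ℕ) n, -f k (k + 1) := by
  have hj : (j : ℕ) ≤ n := Nat.lt_succ_iff.mp j.isLt
  rw [adjugate_fin_succ_eq_det_submatrix, Fin.succAbove_last,
    det_submatrix_castSucc_succAbove_of_hessenberg hf, prod_neg, Nat.card_Ico, Fin.val_last,
    show n + (j : ℕ) = (n - j) + 2 * j by omega, pow_add, pow_mul]
  simp only [neg_one_sq, one_pow, mul_one]
  ring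

end Hessenberg

section Substochastic

variable {ι : Type*} [Fintype ι] [DecidableEq ι]

theorem sum_pow_succ_apply {R : Type*} [CommSemiring R] (Q : Matrix ι ι R) (n : ℕ) (i : ι) :
    ∑ j, (Q ^ (n + 1)) i j = ∑ k, Q i k * ∑ j, (Q ^ n) k j := by
  simp only [pow_succ', mul_apply, mul_sum]
  exact sum_comm

variable {Q : Matrix ι ι ℝ}

theorem sum_pow_apply_le_one (hQ : ∀ i j, 0 ≤ Q i j) (hrow : ∀ i, ∑ j, Q i j ≤ 1) (n : ℕ)
    (i : ι) : ∑ j, (Q ^ n) i j ≤ 1 := by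
  induction n generalizing i with
  | zero => simp [one_apply]
  | succ n ih =>
    rw [sum_pow_succ_apply]
    exact (sum_le_sum fun k _ => mul_le_of_le_one_right (hQ i k) (ih k)).trans (hrow i)

theorem exists_sum_pow_apply_lt_one_of_pos (hQ : ∀ i j, 0 ≤ Q i j)
    (hrow : ∀ i, ∑ j, Q i j ≤ 1) {i j : ι} (hij : 0 < Q i j)
    (hj : ∃ n, ∑ k, (Q ^ n) j k < 1) : ∃ n, ∑ k, (Q ^ n) i k < 1 := by
  obtain ⟨n, hn⟩ := hj
  refine ⟨n + 1, ?_⟩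
  rw [sum_pow_succ_apply]
  refine lt_of_lt_of_le (sum_lt_sum (fun l _ => ?_) ⟨j, mem_univ j, ?_⟩) (hrow i)
  · exact mul_le_of_le_one_right (hQ i l) (sum_pow_apply_le_one hQ hrow n l)
  · exact mul_lt_of_lt_one_right hij hn

theorem det_one_sub_ne_zero_of_leaky (hQ : ∀ i j, 0 ≤ Q i j)
    (hleak : ∀ i, ∃ n, ∑ j, (Q ^ n) i j < 1) :
    (1 - Q).det ≠ 0 := by
  intro hdet
  obtain ⟨v, hv0, hv⟩ := exists_mulVec_eq_zero_iff.mpr hdet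
  have hfix : ∀ n, Q ^ n *ᵥ v = v := by
    rw [sub_mulVec, one_mulVec, sub_eq_zero] at hv
    intro n
    induction n with
    | zero => simp
    | succ n ih => rw [pow_succ, ← mulVec_mulVec, ← hv, ih]
  obtain ⟨j, hj⟩ := Function.ne_iff.mp hv0
  have : Nonempty ι := ⟨j⟩
  obtain ⟨i, hi⟩ := Finite.exists_max fun i => |v i|
  obtain ⟨n, hn⟩ := hleak i
  have hpos : 0 < |v i| := (abs_pos.mpr hj).trans_le (hi j)
  have : |v i| < |v i| :=
    calc |v i| = |∑ j, (Q ^ n) i j * v j| := by rw [← congrFun (hfix n) i]; rfl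
      _ ≤ ∑ j, (Q ^ n) i j * |v i| := by
        refine (abs_sum_le_sum_abs _ _).trans (sum_le_sum fun j _ => ?_)
        rw [abs_mul, abs_of_nonneg (pow_apply_nonneg hQ n i j)]
        exact mul_le_mul_of_nonneg_left (hi j) (pow_apply_nonneg hQ n i j)
      _ = (∑ j, (Q ^ n) i j) * |v i| := (sum_mul _ _ _).symm
      _ < |v i| := mul_lt_of_lt_one_left hpos hn
  exact lt_irrefl _ this

theorem abs_one_sub_pow_apply_le_one (hQ : ∀ i j, 0 ≤ Q i j)
    (hrow : ∀ i, ∑ j, Q i j ≤ 1) (n : ℕ) (i j : ι) : |(1 - Q ^ n) i j| ≤ 1 := by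
  have h0 := pow_apply_nonneg hQ n i j
  have h1 : (Q ^ n) i j ≤ 1 :=
    (single_le_sum (fun k _ => pow_apply_nonneg hQ n i k) (mem_univ j)).trans
      (sum_pow_apply_le_one hQ hrow n i)
  rw [Matrix.sub_apply, one_apply, abs_le]
  split_ifs <;> constructor <;> linarith

theorem hasSum_pow_of_leaky (hQ : ∀ i j, 0 ≤ Q i j) (hrow : ∀ i, ∑ j, Q i j ≤ 1)
    (hleak : ∀ i, ∃ n, ∑ j, (Q ^ n) i j < 1) :
    HasSum (fun n => Q ^ n) (1 - Q)⁻¹ := by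
  have hunit : IsUnit (1 - Q).det :=
    isUnit_iff_ne_zero.mpr (det_one_sub_ne_zero_of_leaky hQ hleak)
  have hpartial : ∀ N, ∑ n ∈ range N, Q ^ n = (1 - Q)⁻¹ * (1 - Q ^ N) := fun N => by
    rw [← mul_neg_geom_sum, nonsing_inv_mul_cancel_left _ _ hunit]
  -- nonnegative entries with bounded partial sums; then `Q ^ N → 0` identifies the limit
  have hsummable : Summable fun n => Q ^ n := by
    refine Pi.summable.mpr fun i => Pi.summable.mpr fun j => ?_
    refine summable_of_sum_range_le (c := ∑ k, |(1 - Q)⁻¹ i k|)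
      (fun n => pow_apply_nonneg hQ n i j) fun N => ?_
    have hN := congrFun (congrFun (hpartial N) i) j
    rw [Matrix.sum_apply] at hN
    rw [hN, mul_apply]
    refine sum_le_sum fun k _ => (le_abs_self _).trans ?_
    rw [abs_mul]
    exact mul_le_of_le_one_right (abs_nonneg _) (abs_one_sub_pow_apply_le_one hQ hrow N k j)
  rw [hsummable.hasSum_iff_tendsto_nat]
  simp only [hpartial]
  simpa using ((hsummable.tendsto_atTop_zero).const_sub 1).const_mul (1 - Q)⁻¹

end Substochastic

section Interior

def interiorMatrix (L : ℕ → ℕ → ℝ) (m : ℕ) : Matrix (Fin m) (Fin m) ℝ :=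
  of fun i j => L (1 + i) (1 + j)

variable {L : ℕ → ℕ → ℝ}

theorem sum_interior_add_le_one (hnn : ∀ i j, 0 ≤ L i j) (hrow : ∀ i, HasSum (fun j => L i j) 1)
    (s m u : ℕ) (hu : ¬(1 ≤ u ∧ u ≤ m)) : ∑ j : Fin m, L s (1 + j) + L s u ≤ 1 := by
  have hu' : u ∉ Ico 1 (1 + m) := by rw [mem_Ico]; omega
  rw [Fin.sum_univ_eq_sum_range (fun j => L s (1 + j)), range_eq_Ico, sum_Ico_add, zero_add,
    add_comm, add_comm m, ← sum_insert hu']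
  exact sum_le_hasSum _ (fun j _ => hnn s j) (hrow s)

theorem sum_interiorMatrix_apply_le_one (hnn : ∀ i j, 0 ≤ L i j)
    (hrow : ∀ i, HasSum (fun j => L i j) 1) {m : ℕ} (i : Fin m) :
    ∑ j, interiorMatrix L m i j ≤ 1 :=
  le_of_add_le_of_nonneg_left (sum_interior_add_le_one hnn hrow _ m 0 (by omega)) (hnn _ 0)

theorem exists_sum_pow_interiorMatrix_apply_lt_one (hnn : ∀ i j, 0 ≤ L i j)
    (hrow : ∀ i, HasSum (fun j => L i j) 1) (hirr : MatIrreducible L) {m : ℕ} (i : Fin m) :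
    ∃ n, ∑ j, (interiorMatrix L m ^ n) i j < 1 := by
  obtain ⟨N, p, -, hp0, hpN, hpos⟩ := hirr (1 + i) 0
  -- backward induction along a positive path from `1 + i` to `0`: the last interior state
  -- before an exit from `[1, m]` leaks at once
  have key : ∀ k ≤ N, ∀ h : 1 ≤ p k ∧ p k ≤ m,
      ∃ n, ∑ j, (interiorMatrix L m ^ n) ⟨p k - 1, by omega⟩ j < 1 := by
    intro k hk
    induction hk using Nat.decreasingInduction with
    | self => intro h; omega
    | of_succ k hk ih =>
      intro h
      by_cases hnext : 1 ≤ p (k + 1) ∧ p (k + 1) ≤ m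
      · refine exists_sum_pow_apply_lt_one_of_pos (fun _ _ => hnn _ _)
          (sum_interiorMatrix_apply_le_one hnn hrow) ?_ (ih hnext)
        simpa [interiorMatrix, Nat.add_sub_cancel' h.1, Nat.add_sub_cancel' hnext.1]
          using hpos k hk
      · refine ⟨1, ?_⟩
        have hle := sum_interior_add_le_one hnn hrow (p k) m (p (k + 1)) hnext
        have hlt := hpos k hk
        simp only [pow_one, interiorMatrix, of_apply, Nat.add_sub_cancel' h.1]
        linarith
  simpa [hp0] using key 0 (Nat.zero_le N) (by omega)

theorem inv_one_sub_interiorMatrix_apply_last (hlt : ∀ i j, i + 1 < j → L i j = 0)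
    (k : ℕ) (i : Fin (k + 1)) :
    (1 - interiorMatrix L (k + 1))⁻¹ i (Fin.last k) =
      detOneSubI L 1 i / detOneSubI L 1 (k + 1) * ∏ j ∈ Ico (i + 1 : ℕ) (k + 1), L j (j + 1) := by
  -- if `1 - Q` is singular, both sides are `0`, since `⁻¹` and `/` send `0` to `0`
  set f : ℕ → ℕ → ℝ := fun i j => (if i = j then 1 else 0) - L (1 + i) (1 + j)
  have hf : ∀ i j, i + 1 < j → f i j = 0 := fun i j h => by
    simp [f, hlt (1 + i) (1 + j) (by omega), show i ≠ j by omega]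
  have hdet : ∀ n, detOneSubI L 1 n = leadingMinor f n := fun n => by
    unfold detOneSubI leadingMinor
    congr 1
    ext a c
    simp [f, one_apply, Fin.ext_iff]
  have hA : 1 - interiorMatrix L (k + 1) = of fun i j : Fin (k + 1) => f i j := by
    ext i j
    simp [interiorMatrix, f, one_apply, Fin.ext_iff]
  rw [Matrix.inv_def, hA, Matrix.smul_apply, adjugate_apply_last_of_hessenberg hf, hdet, hdet,
    Ring.inverse_eq_inv', smul_eq_mul, ← prod_Ico_add' (fun j => L j (j + 1))]
  simp only [f, show ∀ j : ℕ, j ≠ j + 1 from fun j => by omega, if_false, zero_sub, neg_neg]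
  rw [div_eq_inv_mul]
  simp only [leadingMinor, add_comm 1, add_assoc]
  ring

end Interior

theorem sum_paths_eq_dotProduct_pow_mulVec {ι R : Type*} [Fintype ι] [DecidableEq ι]
    [CommSemiring R] (Q : Matrix ι ι R) (u w : ι → R) (n : ℕ) :
    ∑ q : Fin (n + 1) → ι, u (q 0) * (∏ k : Fin n, Q (q k.castSucc) (q k.succ)) *
      w (q (Fin.last n)) = u ⬝ᵥ (Q ^ n *ᵥ w) := by
  induction n generalizing w with
  | zero =>
    rw [pow_zero, one_mulVec, dotProduct]
    exact Fintype.sum_equiv (Equiv.funUnique (Fin 1) ι) _ _ fun q => by simp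
  | succ n ih =>
    rw [pow_succ, ← mulVec_mulVec, ← ih, ← (Fin.snocEquiv fun _ => ι).sum_comp,
      Fintype.sum_prod_type, sum_comm]
    refine sum_congr rfl fun r _ => ?_
    simp only [Fin.snocEquiv, Equiv.coe_fn_mk, Fin.prod_univ_castSucc, Fin.succ_castSucc,
      Fin.snoc_castSucc, Fin.succ_last, Fin.snoc_last, mulVec, dotProduct, mul_sum, mul_assoc]
    rfl

namespace IsMarkovLaw

variable {M : ℕ → ℕ → ℝ} {s : ℕ} {μ : Measure (ℕ → ℕ)}

theorem measure_compl_start (hμ : IsMarkovLaw M s μ) : μ {ω | ω 0 = s}ᶜ = 0 := by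
  have := hμ.1
  rw [prob_compl_eq_zero_iff (measurableSet_eq_fun (measurable_pi_apply 0) measurable_const)]
  simpa using hμ.2 0 fun _ => s

theorem measure_stay_interior_then (hμ : IsMarkovLaw M s μ) (hnn : ∀ i j, 0 ≤ M i j) {m : ℕ}
    (hs : 1 ≤ s ∧ s ≤ m) (n b : ℕ) :
    μ {ω | ω (n + 1) = b ∧ ∀ k, 1 ≤ k → k < n + 1 → 1 ≤ ω k ∧ ω k ≤ m} =
      ENNReal.ofReal ((interiorMatrix M m ^ n *ᵥ fun t => M (1 + t) b) ⟨s - 1, by omega⟩) := by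
  set i₀ : Fin m := ⟨s - 1, by omega⟩
  let path (q : Fin (n + 1) → Fin m) (k : ℕ) : ℕ := if h : k < n + 1 then 1 + q ⟨k, h⟩ else b
  let cyl (q : Fin (n + 1) → Fin m) : Set (ℕ → ℕ) := {ω | ∀ k ≤ n + 1, ω k = path q k}
  have hunion : {ω | ω (n + 1) = b ∧ ∀ k, 1 ≤ k → k < n + 1 → 1 ≤ ω k ∧ ω k ≤ m} ∩
      {ω | 1 ≤ ω 0 ∧ ω 0 ≤ m} = ⋃ q, cyl q := by
    ext ω
    simp only [Set.mem_inter_iff, Set.mem_ofPred_eq, Set.mem_iUnion, cyl, path]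
    constructor
    · rintro ⟨⟨hb, hin⟩, h0⟩
      have hbox : ∀ k < n + 1, 1 ≤ ω k ∧ ω k ≤ m := fun k hk => by
        rcases Nat.eq_zero_or_pos k with rfl | hk0
        · exact h0
        · exact hin k hk0 hk
      refine ⟨fun k => ⟨ω k - 1, by have := hbox k k.isLt; omega⟩, fun k hk => ?_⟩
      split_ifs with h
      · have := hbox k h
        simp only
        omega
      · rw [show k = n + 1 by omega, hb]
    · rintro ⟨q, hq⟩
      have hint : ∀ k < n + 1, 1 ≤ ω k ∧ ω k ≤ m := fun k hk => by
        rw [hq k (by omega), dif_pos hk]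
        have := (q ⟨k, hk⟩).isLt
        omega
      exact ⟨⟨by rw [hq (n + 1) le_rfl, dif_neg (lt_irrefl _)], fun k _ hk => hint k hk⟩,
        hint 0 (Nat.succ_pos n)⟩
  have hdisj : Pairwise (Function.onFun Disjoint cyl) := by
    intro q q' hne
    refine Set.disjoint_left.mpr fun ω hω hω' => hne (funext fun k => Fin.ext ?_)
    have h := (hω k (by omega)).symm.trans (hω' k (by omega))
    simpa [path, Fin.is_le] using h
  have hcyl : ∀ q, μ (cyl q) = ENNReal.ofReal ((Pi.single i₀ 1 : Fin m → ℝ) (q 0) *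
      (∏ k : Fin n, interiorMatrix M m (q k.castSucc) (q k.succ)) * M (1 + q (Fin.last n)) b) := by
    intro q
    rw [hμ.2 (n + 1) (path q), prod_range_succ, ← Fin.prod_univ_eq_prod_range]
    simp [path, interiorMatrix, Pi.single_apply, Fin.ext_iff, i₀,
      show 1 + (q 0 : ℕ) = s ↔ (q 0 : ℕ) = s - 1 by omega]
    rfl
  have hstart : μ {ω : ℕ → ℕ | 1 ≤ ω 0 ∧ ω 0 ≤ m}ᶜ = 0 :=
    measure_mono_null (Set.compl_subset_compl.mpr fun ω (h : ω 0 = s) =>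
      show 1 ≤ ω 0 ∧ ω 0 ≤ m by rw [h]; exact hs)
      hμ.measure_compl_start
  rw [← measure_inter_conull hstart, hunion,
    measure_iUnion hdisj fun q => by measurability, tsum_fintype]
  simp only [hcyl]
  rw [← ENNReal.ofReal_sum_of_nonneg,
    sum_paths_eq_dotProduct_pow_mulVec (interiorMatrix M m) _ (fun t => M (1 + t) b) n,
    single_dotProduct, one_mul]
  intro q _
  refine mul_nonneg (mul_nonneg ?_ (prod_nonneg fun k _ => hnn _ _)) (hnn _ _)
  rw [Pi.single_apply]
  split_ifs <;> norm_num

theorem measure_stay_interior_then_top (hμ : IsMarkovLaw M s μ) (hnn : ∀ i j, 0 ≤ M i j)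
    (hlt : ∀ i j, i + 1 < j → M i j = 0) {k : ℕ} (hs : 1 ≤ s ∧ s ≤ k + 1) (n : ℕ) :
    μ {ω | ω (n + 1) = k + 2 ∧ ∀ m, 1 ≤ m → m < n + 1 → 1 ≤ ω m ∧ ω m ≤ k + 1} =
      ENNReal.ofReal
        ((interiorMatrix M (k + 1) ^ n) ⟨s - 1, by omega⟩ (Fin.last k) * M (k + 1) (k + 2)) := by
  have hexit : (fun t : Fin (k + 1) => M (1 + t) (k + 2)) =
      Pi.single (Fin.last k) (M (k + 1) (k + 2)) := by
    ext t
    rcases eq_or_ne t (Fin.last k) with rfl | ht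
    · simp [add_comm]
    · have := Fin.val_lt_last ht
      rw [Pi.single_eq_of_ne ht, hlt _ _ (by omega)]
  rw [hμ.measure_stay_interior_then hnn hs, hexit, mulVec_single]
  rfl

end IsMarkovLaw

section HittingTime

theorem setOf_exists_hit_eq_iUnion (b c : ℕ) :
    {ω : ℕ → ℕ | ∃ n, 1 ≤ n ∧ ω n = b ∧ ∀ m, 1 ≤ m → m < n → 1 ≤ ω m ∧ ω m ≤ c} =
      ⋃ n, {ω | ω (n + 1) = b ∧ ∀ m, 1 ≤ m → m < n + 1 → 1 ≤ ω m ∧ ω m ≤ c} := by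
  ext ω
  simp only [Set.mem_ofPred_eq, Set.mem_iUnion]
  constructor
  · rintro ⟨n, hn, h⟩
    obtain ⟨n, rfl⟩ := Nat.exists_eq_add_of_le' hn
    exact ⟨n, h⟩
  · rintro ⟨n, h⟩
    exact ⟨n + 1, Nat.le_add_left 1 n, h⟩

theorem pairwise_disjoint_hit_at {b c : ℕ} (hcb : c < b) :
    Pairwise (Function.onFun Disjoint fun n =>
      {ω : ℕ → ℕ | ω (n + 1) = b ∧ ∀ m, 1 ≤ m → m < n + 1 → 1 ≤ ω m ∧ ω m ≤ c}) := by
  intro n n' hne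
  refine Set.disjoint_left.mpr fun ω ⟨hb, hin⟩ ⟨hb', hin'⟩ => ?_
  rcases lt_or_gt_of_ne hne with h | h
  · have := hin' (n + 1) (by omega) (by omega)
    omega
  · have := hin (n' + 1) (by omega) (by omega)
    omega

end HittingTime

/-- Theorem 3.2: for an irreducible almost lower triangular transition matrix `L` and
`0 < x < b`, the probability that the chain started at `x` hits `b` strictly before `0`
is `(det(Id − L_{[1,x−1]}) / det(Id − L_{[1,b−1]})) · ∏_{j=x}^{b−1} L j (j+1)`. -/
theorem hitting_b_before_zero_almost_lower_triangular (L : ℕ → ℕ → ℝ)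
    (hnn : ∀ i j, 0 ≤ L i j)
    (hrow : ∀ i, HasSum (fun j => L i j) 1)
    (hlt : ∀ i j, i + 1 < j → L i j = 0)
    (hirr : MatIrreducible L)
    (x b : ℕ) (hx : 0 < x) (hxb : x < b)
    (μ : MeasureTheory.Measure (ℕ → ℕ)) (hμ : IsMarkovLaw L x μ) :
    μ {ω | ∃ n, 1 ≤ n ∧ ω n = b ∧ ∀ m, 1 ≤ m → m < n → 1 ≤ ω m ∧ ω m ≤ b - 1} =
      ENNReal.ofReal
        ((detOneSubI L 1 (x - 1) / detOneSubI L 1 (b - 1)) *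
          ∏ j ∈ Finset.Icc x (b - 1), L j (j + 1)) := by
  obtain ⟨k, rfl⟩ : ∃ k, b = k + 2 := ⟨b - 2, by omega⟩
  rw [show k + 2 - 1 = k + 1 by omega]
  set Q := interiorMatrix L (k + 1)
  set i₀ : Fin (k + 1) := ⟨x - 1, by omega⟩
  have hQnn : ∀ i j, 0 ≤ Q i j := fun _ _ => hnn _ _
  have hQ : HasSum (fun n => Q ^ n) (1 - Q)⁻¹ :=
    hasSum_pow_of_leaky hQnn (sum_interiorMatrix_apply_le_one hnn hrow)
      (exists_sum_pow_interiorMatrix_apply_lt_one hnn hrow hirr)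
  have hentry : HasSum (fun n => (Q ^ n) i₀ (Fin.last k) * L (k + 1) (k + 2))
      ((1 - Q)⁻¹ i₀ (Fin.last k) * L (k + 1) (k + 2)) :=
    ((Pi.hasSum.mp (Pi.hasSum.mp hQ i₀)) (Fin.last k)).mul_right _
  rw [setOf_exists_hit_eq_iUnion, measure_iUnion (pairwise_disjoint_hit_at (by omega))
      fun n => by measurability,
    tsum_congr (hμ.measure_stay_interior_then_top hnn hlt ⟨hx, by omega⟩),
    ← ENNReal.ofReal_tsum_of_nonneg
      (fun n => mul_nonneg (pow_apply_nonneg hQnn _ _ _) (hnn _ _)) hentry.summable,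
    hentry.tsum_eq, inv_one_sub_interiorMatrix_apply_last hlt, ← Ico_add_one_right_eq_Icc,
    prod_Ico_succ_top (show x ≤ k + 1 by omega)]
  simp only [i₀, Nat.sub_add_cancel hx]
  rw [mul_assoc]
end

section
/- Let s ∈ ℕ and let L be an irreducible transition matrix on the finite state space {0,…,s} (L i j ≥ 0 and ∑_{j=0}^{s} L i j = 1 for every i) which is almost lower triangular, i.e. L i j = 0 whenever j > i + 1. Define, for a ∈ {0,…,s}, η a = det(Id − L_{[a+1,s]}) · ∏_{i=1}^{a} L (i−1) i, with the convention det(Id − L_{[s+1,s]}) = 1. Then η is invariant for L: for every b ∈ {0,…,s}, ∑_{a=0}^{s} η a · L a b = η b. -/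
open Finset

section Hessenberg

variable {R : Type*} [CommRing R]

noncomputable def blockDet (M : ℕ → ℕ → R) (a n : ℕ) : R :=
  Matrix.det (Matrix.of fun i j : Fin n => M (a + i) (a + j))

theorem det_minor_eq_prod_mul_blockDet {n : ℕ} (M : ℕ → ℕ → R) (a : ℕ) (i : Fin (n + 1))
    (hM : ∀ r c, r + 1 < c → c ≤ a + n → M r c = 0) :
    Matrix.det (Matrix.of fun r c : Fin n => M (a + i.succAbove r) (a + c + 1)) =
      (∏ r ∈ range i, M (a + r) (a + r + 1)) * blockDet M (a + i + 1) (n - i) := by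
  induction n generalizing a with
  | zero =>
    obtain rfl : i = 0 := Fin.fin_one_eq_zero i
    simp [blockDet]
  | succ m ih =>
    induction i using Fin.cases with
    | zero =>
      simp only [Fin.succAbove_zero, Fin.val_succ, Fin.val_zero, range_zero, prod_empty,
        one_mul, Nat.sub_zero, add_zero, blockDet]
      congr 2 with r c
      ring_nf
    | succ j =>
      rw [Matrix.det_succ_row_zero, Fintype.sum_eq_single 0 fun c hc => by
        have : M a (a + c + 1) = 0 := hM _ _ (by have := Fin.pos_iff_ne_zero.2 hc; omega)
          (by omega)
        simp [this]]
      have hsub :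
          (Matrix.of fun r c : Fin (m + 1) => M (a + j.succ.succAbove r) (a + c + 1)).submatrix
            Fin.succ Fin.succ =
          Matrix.of fun r c : Fin m => M (a + 1 + j.succAbove r) (a + 1 + c + 1) := by
        ext r c
        simp only [Matrix.submatrix_apply, Matrix.of_apply, Fin.succ_succAbove_succ, Fin.val_succ]
        ring_nf
      rw [Fin.succAbove_zero, hsub, Matrix.of_apply, Fin.succ_succAbove_zero,
        ih (a + 1) j (fun r c h hc => hM r c h (by omega)), Fin.val_succ, prod_range_succ']
      simp only [Fin.val_zero, pow_zero, one_mul, add_zero, Nat.add_sub_add_right]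
      ring_nf

theorem blockDet_succ_eq_sum (M : ℕ → ℕ → R) (a n : ℕ)
    (hM : ∀ r c, r + 1 < c → c ≤ a + n → M r c = 0) :
    blockDet M a (n + 1) = ∑ i ∈ range (n + 1), (-1) ^ i * M (a + i) a *
      ((∏ r ∈ range i, M (a + r) (a + r + 1)) * blockDet M (a + i + 1) (n - i)) := by
  rw [blockDet, Matrix.det_succ_column_zero, ← Fin.sum_univ_eq_sum_range]
  refine sum_congr rfl fun i _ => ?_
  rw [← det_minor_eq_prod_mul_blockDet M a i hM]
  simp only [Matrix.of_apply, Fin.val_zero, add_zero, Matrix.submatrix, Fin.val_succ, add_assoc]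

end Hessenberg

theorem detOneSubI_eq_blockDet (L : ℕ → ℕ → ℝ) (a s : ℕ) :
    detOneSubI L a s = blockDet (fun i j => (if i = j then 1 else 0) - L i j) a (s + 1 - a) := by
  rw [detOneSubI, blockDet]
  congr 1 with i j
  simp [Matrix.one_apply, Fin.ext_iff]

theorem detOneSubI_succ_sub_detOneSubI (L : ℕ → ℕ → ℝ) {s b : ℕ}
    (hL : ∀ i j, i + 1 < j → j ≤ s → L i j = 0) (hb : b ≤ s) :
    detOneSubI L (b + 1) s - detOneSubI L b s = ∑ i ∈ range (s - b + 1),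
      L (b + i) b * (∏ r ∈ range i, L (b + r) (b + r + 1)) * detOneSubI L (b + i + 1) s := by
  simp only [detOneSubI_eq_blockDet]
  rw [show s + 1 - b = s - b + 1 by omega, blockDet_succ_eq_sum _ _ _ fun r c h hc => by
    simp [(show r ≠ c by omega), hL r c h (by omega)]]
  have hsign : ∀ (k : ℕ) (x p d : ℝ), (-1) ^ k * x * ((-1) ^ k * p * d) = x * p * d :=
    fun k x p d => by
      have h : (-1 : ℝ) ^ k * (-1) ^ k = 1 := by rw [← mul_pow]; norm_num
      linear_combination x * p * d * h
  rw [sum_range_succ', sum_range_succ']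
  simp only [Nat.add_sub_add_right, Nat.add_eq_left, Nat.add_eq_zero_iff, one_ne_zero,
    and_false, ↓reduceIte, zero_sub, mul_neg, Nat.left_eq_add, prod_neg, card_range, Nat.sub_sub,
    neg_mul, hsign, sum_neg_distrib, pow_zero, add_zero, one_mul, range_zero, card_empty,
    prod_empty, mul_one, tsub_zero]
  ring

theorem detOneSubI_zero_eq_zero (L : ℕ → ℕ → ℝ) {s : ℕ}
    (hrow : ∀ i, i ≤ s → ∑ j ∈ range (s + 1), L i j = 1) : detOneSubI L 0 s = 0 := by
  rw [detOneSubI, ← Matrix.exists_mulVec_eq_zero_iff]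
  refine ⟨fun _ => 1, fun h => one_ne_zero (congrFun h ⟨0, by omega⟩), ?_⟩
  rw [Matrix.sub_mulVec, Matrix.one_mulVec, sub_eq_zero]
  ext i
  simp [Matrix.mulVec, dotProduct, Fin.sum_univ_eq_sum_range (fun j => L i j), hrow i (by omega)]

theorem sum_range_detOneSubI_mul_prod_mul (L : ℕ → ℕ → ℝ) {s b : ℕ}
    (hrow : ∀ i, i ≤ s → ∑ j ∈ range (s + 1), L i j = 1)
    (hL : ∀ i j, i + 1 < j → j ≤ s → L i j = 0) (hb : b ≤ s) :
    ∑ a ∈ range b, detOneSubI L (a + 1) s * (∏ r ∈ range a, L r (r + 1)) * L a b =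
      detOneSubI L b s * ∏ r ∈ range b, L r (r + 1) := by
  cases b with
  | zero => simp [detOneSubI_zero_eq_zero L hrow]
  | succ k =>
    rw [sum_range_succ, prod_range_succ, sum_eq_zero fun a ha => by
      rw [hL a (k + 1) (by simp at ha; omega) hb, mul_zero]]
    ring

theorem invariant_measure_finite_almost_lower_triangular_general (s : ℕ) (L : ℕ → ℕ → ℝ)
    (hrow : ∀ i, i ≤ s → ∑ j ∈ Finset.range (s + 1), L i j = 1)
    (hlt : ∀ i j, i ≤ s → j ≤ s → i + 1 < j → L i j = 0)
    (η : ℕ → ℝ)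
    (hη : ∀ a, η a = detOneSubI L (a + 1) s * ∏ i ∈ Finset.Icc 1 a, L (i - 1) i) :
    ∀ b ≤ s, ∑ a ∈ Finset.range (s + 1), η a * L a b = η b := by
  intro b hb
  have hL : ∀ i j, i + 1 < j → j ≤ s → L i j = 0 := fun i j h hj => hlt i j (by omega) hj h
  have hη' : ∀ a, η a = detOneSubI L (a + 1) s * ∏ r ∈ range a, L r (r + 1) := fun a => by
    rw [hη, ← Ico_add_one_right_eq_Icc, prod_Ico_eq_prod_range]
    simp [add_comm]
  have hhigh : ∑ i ∈ range (s - b + 1), η (b + i) * L (b + i) b =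
      (∏ r ∈ range b, L r (r + 1)) * (detOneSubI L (b + 1) s - detOneSubI L b s) := by
    rw [detOneSubI_succ_sub_detOneSubI L hL hb, mul_sum]
    refine sum_congr rfl fun i _ => ?_
    rw [hη', prod_range_add]
    ring
  rw [show s + 1 = b + (s - b + 1) by omega, sum_range_add, hhigh]
  simp only [hη']
  rw [sum_range_detOneSubI_mul_prod_mul L hrow hL hb]
  ring

/-- Theorem 3.6: on the finite state space `{0,…,s}`, the measure
`η a = det(Id − L_{[a+1,s]}) · ∏_{i=1}^a L (i−1) i` is invariant for every irreducible
almost lower triangular transition matrix `L` on `{0,…,s}`. -/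
theorem invariant_measure_finite_almost_lower_triangular (s : ℕ) (L : ℕ → ℕ → ℝ)
    (hnn : ∀ i j, i ≤ s → j ≤ s → 0 ≤ L i j)
    (hrow : ∀ i, i ≤ s → ∑ j ∈ Finset.range (s + 1), L i j = 1)
    (hlt : ∀ i j, i ≤ s → j ≤ s → i + 1 < j → L i j = 0)
    (hirr : ∀ i j, i ≤ s → j ≤ s →
      ∃ (n : ℕ) (x : ℕ → ℕ), 0 < n ∧ x 0 = i ∧ x n = j ∧
        (∀ k, k ≤ n → x k ≤ s) ∧ ∀ k, k < n → 0 < L (x k) (x (k + 1)))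
    (η : ℕ → ℝ)
    (hη : ∀ a, η a = detOneSubI L (a + 1) s * ∏ i ∈ Finset.Icc 1 a, L (i - 1) i) :
    ∀ b ≤ s, ∑ a ∈ Finset.range (s + 1), η a * L a b = η b :=
  invariant_measure_finite_almost_lower_triangular_general s L hrow hlt η hη
end

section
/- Let L be an irreducible almost lower triangular transition matrix on ℕ and, for each n, let ρ^{(n)} be an invariant probability distribution of the projection L^{(n)} of L onto {0,…,n} with ρ^{(n)} 0 > 0; set η^{(n)} a = ρ^{(n)} a / ρ^{(n)} 0 for a ≤ n and η^{(n)} a = 0 for a > n. Assume: (a) there exists S : ℕ → ℝ with S a ≥ 0 for all a, such that for every b the series ∑_{a ≥ b+1} S a · L a b converges, and η^{(n)} a ≤ S a for all a and n; (b) for every a the limit η a := lim_{n→∞} η^{(n)} a exists; (c) for every a, the tail sums ∑_{j ≥ n} L j a are finite for all large n and η^{(n)} n · ∑_{j ≥ n} L j a → 0 as n → ∞. Then η is an invariant measure for L: for every b the series ∑_a η a · L a b converges with sum η b. -/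
open Filter Topology Finset

/-!
For a fixed column `b` and every `n > b`, the column `b` of the projection `L^{(n)}` is the
column `b` of `L`, so the invariance equation of `ρ^{(n)}` at `b`, divided by `ρ^{(n)} 0`, reads
`∑ₐ η^{(n)} a · L a b = η^{(n)} b`. The domination `η^{(n)} ≤ S` makes `a ↦ S a · L a b` a
summable majorant, and dominated convergence for series lets `n → ∞` on both sides.
-/

lemma projTM_of_lt (M : ℕ → ℕ → ℝ) {n j : ℕ} (hj : j < n) (i : ℕ) : projTM M n i j = M i j :=
  if_pos hj

lemma hasSum_of_tendsto_of_dominated {α β G : Type*} [NormedAddCommGroup G] [CompleteSpace G]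
    {𝓕 : Filter α} [𝓕.NeBot] {f : α → β → G} {g : β → G} {bound : β → ℝ} {c : α → G} {s : G}
    (hbound : Summable bound) (hlim : ∀ k, Tendsto (f · k) 𝓕 (𝓝 (g k)))
    (hdom : ∀ᶠ n in 𝓕, ∀ k, ‖f n k‖ ≤ bound k) (hf : ∀ᶠ n in 𝓕, HasSum (f n) (c n))
    (hc : Tendsto c 𝓕 (𝓝 s)) : HasSum g s := by
  have hg : Summable g := hbound.of_norm_bounded fun k =>
    le_of_tendsto ((continuous_norm.tendsto _).comp (hlim k)) (hdom.mono fun _ h => h k)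
  have htsum : Tendsto (fun n => ∑' k, f n k) 𝓕 (𝓝 (∑' k, g k)) :=
    tendsto_tsum_of_dominated_convergence hbound hlim hdom
  have hc' : Tendsto (fun n => ∑' k, f n k) 𝓕 (𝓝 s) :=
    hc.congr' (hf.mono fun _ hn => hn.tsum_eq.symm)
  exact tendsto_nhds_unique htsum hc' ▸ hg.hasSum

lemma hasSum_mul_column_of_projTM_invariant {L : ℕ → ℕ → ℝ} {ρ η : ℕ → ℝ} {n b : ℕ}
    (hb : b < n) (hinv : ∑ a ∈ range (n + 1), ρ a * projTM L n a b = ρ b)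
    (hη : ∀ a, η a = if a ≤ n then ρ a / ρ 0 else 0) :
    HasSum (fun a => η a * L a b) (η b) := by
  have hsupp : ∀ a ∉ range (n + 1), η a * L a b = 0 := fun a ha => by
    rw [hη, if_neg (by simpa [Nat.lt_succ_iff] using ha), zero_mul]
  suffices η b = ∑ a ∈ range (n + 1), η a * L a b from this ▸ hasSum_sum_of_ne_finset_zero hsupp
  calc η b = (∑ a ∈ range (n + 1), ρ a * L a b) / ρ 0 := by
        simp only [projTM_of_lt L hb] at hinv
        rw [hinv, hη, if_pos hb.le]
    _ = ∑ a ∈ range (n + 1), η a * L a b := by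
        rw [sum_div]
        refine sum_congr rfl fun a ha => ?_
        rw [hη, if_pos (Nat.lt_succ_iff.mp (mem_range.mp ha)), div_mul_eq_mul_div]

lemma summable_of_summable_ite_le {G : Type*} [AddCommGroup G] [TopologicalSpace G]
    [IsTopologicalAddGroup G] {f : ℕ → G} (k : ℕ)
    (hf : Summable fun a => if k ≤ a then f a else 0) : Summable f :=
  hf.congr_atTop <| (eventually_ge_atTop k).mono fun _ ha => if_pos ha

theorem invariant_measure_from_projections_almost_lower_triangular_general (L : ℕ → ℕ → ℝ)
    (hnn : ∀ i j, 0 ≤ L i j)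
    (ρ : ℕ → ℕ → ℝ)
    (hρnn : ∀ n a, 0 ≤ ρ n a)
    (hρinv : ∀ n, ∀ b ≤ n, ∑ a ∈ Finset.range (n + 1), ρ n a * projTM L n a b = ρ n b)
    (η : ℕ → ℕ → ℝ)
    (hη : ∀ n a, η n a = if a ≤ n then ρ n a / ρ n 0 else 0)
    -- (a) uniform domination by a summable-against-columns sequence S
    (S : ℕ → ℝ)
    (hSsum : ∀ b, Summable (fun a => if b + 1 ≤ a then S a * L a b else 0))
    (hbound : ∀ n a, η n a ≤ S a)
    -- (b) pointwise convergence
    (ηlim : ℕ → ℝ)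
    (hηlim : ∀ a, Filter.Tendsto (fun n => η n a) Filter.atTop (nhds (ηlim a))) :
    ∀ b, HasSum (fun a => ηlim a * L a b) (ηlim b) := by
  intro b
  have hηnn : ∀ n a, 0 ≤ η n a := fun n a => by
    rw [hη]
    split_ifs
    exacts [div_nonneg (hρnn n a) (hρnn n 0), le_rfl]
  have hdom : ∀ n a, ‖η n a * L a b‖ ≤ S a * L a b := fun n a => by
    rw [Real.norm_of_nonneg (mul_nonneg (hηnn n a) (hnn a b))]
    exact mul_le_mul_of_nonneg_right (hbound n a) (hnn a b)
  refine hasSum_of_tendsto_of_dominated (summable_of_summable_ite_le (b + 1) (hSsum b))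
    (fun a => (hηlim a).mul_const (L a b)) (.of_forall hdom) ?_ (hηlim b)
  filter_upwards [eventually_gt_atTop b] with n hn
  exact hasSum_mul_column_of_projTM_invariant hn (hρinv n b hn.le) (hη n)

/-- Proposition 3.7: under a uniform domination (a), pointwise convergence (b) and a
vanishing boundary term (c), the pointwise limit `η` of the normalised invariant
distributions `η^{(n)} a = ρ^{(n)} a / ρ^{(n)} 0` of the projections `L^{(n)}` is an
invariant measure for the irreducible almost lower triangular transition matrix `L`. -/
theorem invariant_measure_from_projections_almost_lower_triangular (L : ℕ → ℕ → ℝ)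
    (hnn : ∀ i j, 0 ≤ L i j)
    (hrow : ∀ i, HasSum (fun j => L i j) 1)
    (hlt : ∀ i j, i + 1 < j → L i j = 0)
    (hirr : MatIrreducible L)
    (ρ : ℕ → ℕ → ℝ)
    (hρnn : ∀ n a, 0 ≤ ρ n a)
    (hρzero : ∀ n a, n < a → ρ n a = 0)
    (hρsum : ∀ n, ∑ a ∈ Finset.range (n + 1), ρ n a = 1)
    (hρinv : ∀ n, ∀ b ≤ n, ∑ a ∈ Finset.range (n + 1), ρ n a * projTM L n a b = ρ n b)
    (hρ0pos : ∀ n, 0 < ρ n 0)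
    (η : ℕ → ℕ → ℝ)
    (hη : ∀ n a, η n a = if a ≤ n then ρ n a / ρ n 0 else 0)
    -- (a) uniform domination by a summable-against-columns sequence S
    (S : ℕ → ℝ) (hSnn : ∀ a, 0 ≤ S a)
    (hSsum : ∀ b, Summable (fun a => if b + 1 ≤ a then S a * L a b else 0))
    (hbound : ∀ n a, η n a ≤ S a)
    -- (b) pointwise convergence
    (ηlim : ℕ → ℝ)
    (hηlim : ∀ a, Filter.Tendsto (fun n => η n a) Filter.atTop (nhds (ηlim a)))
    -- (c) vanishing boundary term
    (htailSummable : ∀ a, ∃ N, ∀ n, N ≤ n → Summable (fun j => if n ≤ j then L j a else 0))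
    (htail : ∀ a, Filter.Tendsto
      (fun n => η n n * ∑' j : ℕ, (if n ≤ j then L j a else 0))
      Filter.atTop (nhds 0)) :
    ∀ b, HasSum (fun a => ηlim a * L a b) (ηlim b) :=
  invariant_measure_from_projections_almost_lower_triangular_general L hnn ρ hρnn hρinv η hη S hSsum
    hbound ηlim hηlim
end
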